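/- arXiv:math/0210303 — 7 statements merged into one kernel-verified Lean document; each statement's English description precedes it below -/
import Mathlib

section
/- If A : ℝ → Sym(n) is a differentiable path of symmetric n×n matrices, then d/dt σ_k(A(t)) = T_{k−1}(A(t))^i_j (d/dt A(t))^j_i, i.e., the derivative of σ_k along the path is the trace of T_{k−1}(A(t)) composed with A'(t). -/
open Matrix Finset

noncomputable def esym (n k : ℕ) (x : Fin n → ℝ) : ℝ :=
  ∑ s ∈ Finset.powersetCard k (Finset.univ : Finset (Fin n)), ∏ i ∈ s, x i

noncomputable def msigma {n : ℕ} (k : ℕ) (A : Matrix (Fin n) (Fin n) ℝ) : ℝ :=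
  if h : A.IsHermitian then esym n k h.eigenvalues else 0

noncomputable def newton {n : ℕ} (q : ℕ) (A : Matrix (Fin n) (Fin n) ℝ) :
    Matrix (Fin n) (Fin n) ℝ :=
  ∑ i ∈ Finset.range (q + 1), ((-1 : ℝ) ^ i * msigma (q - i) A) • A ^ i

open Polynomial

variable {n : ℕ}

section CharpolyFacts

lemma charpoly_conj_unitary (U D : Matrix (Fin n) (Fin n) ℝ) (hU : U * star U = 1)
    (hU' : star U * U = 1) : (U * D * star U).charpoly = D.charpoly := by
  have hcm : charmatrix (U * D * star U)
      = (C : ℝ →+* ℝ[X]).mapMatrix U * charmatrix D * (C : ℝ →+* ℝ[X]).mapMatrix (star U) := by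
    unfold charmatrix
    rw [Matrix.mul_sub, Matrix.sub_mul]
    congr 1
    · rw [← (Matrix.scalar_commute X (fun r => Commute.all _ _)
        ((C : ℝ →+* ℝ[X]).mapMatrix U)).eq, Matrix.mul_assoc, ← _root_.map_mul, hU,
        _root_.map_one, Matrix.mul_one]
    · rw [← _root_.map_mul, ← _root_.map_mul]
  rw [Matrix.charpoly, Matrix.charpoly, hcm, det_mul, det_mul]
  rw [mul_comm, ← mul_assoc, ← det_mul, ← _root_.map_mul ((C : ℝ →+* ℝ[X]).mapMatrix), hU',
    _root_.map_one, det_one, one_mul]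

lemma charpoly_diagonal (d : Fin n → ℝ) :
    (Matrix.diagonal d).charpoly = ∏ i, (X - C (d i)) := by
  have : charmatrix (Matrix.diagonal d) = Matrix.diagonal fun i => X - C (d i) := by
    refine Matrix.ext fun i j => ?_
    by_cases h : i = j
    · subst h; simp [charmatrix_apply_eq]
    · rw [charmatrix_apply_ne _ _ _ h, diagonal_apply_ne _ h, diagonal_apply_ne _ h, map_zero,
        neg_zero]
  rw [Matrix.charpoly, this, det_diagonal]

lemma charpoly_hermitian (A : Matrix (Fin n) (Fin n) ℝ) (hA : A.IsHermitian) :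
    A.charpoly = ∏ i, (X - C (hA.eigenvalues i)) := by
  have hspec := hA.spectral_theorem
  rw [RCLike.ofReal_real_eq_id] at hspec
  have hU := Matrix.mem_unitaryGroup_iff.mp (hA.eigenvectorUnitary).2
  have hU' := Matrix.mem_unitaryGroup_iff'.mp (hA.eigenvectorUnitary).2
  calc A.charpoly = ((hA.eigenvectorUnitary : Matrix (Fin n) (Fin n) ℝ)
        * Matrix.diagonal hA.eigenvalues
        * star (hA.eigenvectorUnitary : Matrix (Fin n) (Fin n) ℝ)).charpoly := by
        rw [Function.id_comp] at hspec
        exact congrArg Matrix.charpoly hspec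
    _ = (Matrix.diagonal hA.eigenvalues).charpoly := charpoly_conj_unitary _ _ hU hU'
    _ = ∏ i, (X - C (hA.eigenvalues i)) := _root_.charpoly_diagonal _

lemma charmatrix_eval (A : Matrix (Fin n) (Fin n) ℝ) (x : ℝ) :
    (charmatrix A).map (eval x) = x • (1 : Matrix (Fin n) (Fin n) ℝ) - A := by
  refine Matrix.ext fun i j => ?_
  by_cases h : i = j
  · subst h
    simp [charmatrix_apply_eq, Matrix.one_apply, Matrix.sub_apply, Matrix.smul_apply]
  · simp [charmatrix_apply_ne _ _ _ h, Matrix.one_apply_ne h, Matrix.sub_apply,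
      Matrix.smul_apply, h]

lemma eval_charpoly (A : Matrix (Fin n) (Fin n) ℝ) (x : ℝ) :
    A.charpoly.eval x = (x • (1 : Matrix (Fin n) (Fin n) ℝ) - A).det := by
  rw [Matrix.charpoly, ← Polynomial.coe_evalRingHom, RingHom.map_det]
  congr 1
  exact charmatrix_eval A x

end CharpolyFacts

section MsigmaFacts

lemma msigma_eq_coeff {k : ℕ} (hkn : k ≤ n) (A : Matrix (Fin n) (Fin n) ℝ)
    (hA : A.IsHermitian) : msigma k A = (-1 : ℝ) ^ k * A.charpoly.coeff (n - k) := by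
  rw [msigma, dif_pos hA]
  have h1 : A.charpoly
      = ((Finset.univ.val.map hA.eigenvalues).map fun t => X - C t).prod := by
    rw [charpoly_hermitian A hA, Multiset.map_map]
    rfl
  have hcard : Multiset.card (Finset.univ.val.map hA.eigenvalues) = n := by
    simp
  have h2 := Multiset.prod_X_sub_C_coeff (Finset.univ.val.map hA.eigenvalues)
    (k := n - k) (by rw [hcard]; exact Nat.sub_le n k)
  rw [h1, h2, hcard, Nat.sub_sub_self hkn]
  rw [Finset.esymm_map_val]
  rw [← mul_assoc, ← mul_pow]
  simp [esym]

lemma msigma_zero (A : Matrix (Fin n) (Fin n) ℝ) (hA : A.IsHermitian) : msigma 0 A = 1 := by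
  rw [msigma, dif_pos hA, esym, Finset.powersetCard_zero]
  simp

lemma msigma_of_gt {k : ℕ} (hkn : n < k) (A : Matrix (Fin n) (Fin n) ℝ) :
    msigma k A = 0 := by
  rw [msigma]
  split
  · rw [esym, Finset.powersetCard_eq_empty.mpr (by simpa using hkn), Finset.sum_empty]
  · rfl

lemma newton_succ (q : ℕ) (A : Matrix (Fin n) (Fin n) ℝ) :
    newton (q + 1) A = msigma (q + 1) A • (1 : Matrix (Fin n) (Fin n) ℝ) - A * newton q A := by
  rw [newton, Finset.sum_range_succ']
  have h0 : ((-1 : ℝ) ^ 0 * msigma (q + 1 - 0) A) • A ^ 0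
      = msigma (q + 1) A • (1 : Matrix (Fin n) (Fin n) ℝ) := by
    simp
  rw [h0]
  have h1 : ∀ i, ((-1 : ℝ) ^ (i + 1) * msigma (q + 1 - (i + 1)) A) • A ^ (i + 1)
      = -(A * (((-1 : ℝ) ^ i * msigma (q - i) A) • A ^ i)) := by
    intro i
    rw [mul_smul_comm, ← pow_succ', pow_succ (-1 : ℝ), Nat.succ_sub_succ]
    rw [mul_comm ((-1:ℝ)^i) (-1:ℝ), mul_assoc, neg_one_mul, neg_smul]
  simp only [h1]
  rw [Finset.sum_neg_distrib, ← Matrix.mul_sum, ← newton, add_comm, sub_eq_add_neg]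

section Crux

lemma natDegree_adj_charmatrix_le (A : Matrix (Fin n) (Fin n) ℝ) (i j : Fin n) :
    ((adjugate (charmatrix A)) i j).natDegree ≤ n - 1 := by
  rw [adjugate_apply, det_apply']
  refine natDegree_sum_le_of_forall_le _ _ fun σ _ => ?_
  refine le_trans (natDegree_mul_le) ?_
  rw [natDegree_intCast, zero_add]
  refine le_trans (natDegree_prod_le _ _) ?_
  have hb : ∀ l : Fin n, l ≠ σ.symm j →
      (((charmatrix A).updateRow j (Pi.single i 1)) (σ l) l).natDegree ≤ 1 := by
    intro l hl
    have hne : σ l ≠ j := by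
      intro h
      exact hl (by rw [← h, Equiv.symm_apply_apply])
    rw [updateRow_ne hne]
    by_cases h : σ l = l
    · rw [h, charmatrix_apply_eq]
      exact le_trans (natDegree_sub_le _ _) (by simp)
    · rw [charmatrix_apply_ne _ _ _ h, natDegree_neg, natDegree_C]
      omega
  have hs : (((charmatrix A).updateRow j (Pi.single i 1)) (σ (σ.symm j)) (σ.symm j)).natDegree
      = 0 := by
    rw [Equiv.apply_symm_apply, updateRow_self]
    by_cases h : σ.symm j = i <;> simp [Pi.single_apply, h]
  calc ∑ l, (((charmatrix A).updateRow j (Pi.single i 1)) (σ l) l).natDegree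
      = (((charmatrix A).updateRow j (Pi.single i 1)) (σ (σ.symm j)) (σ.symm j)).natDegree
        + ∑ l ∈ Finset.univ.erase (σ.symm j),
            (((charmatrix A).updateRow j (Pi.single i 1)) (σ l) l).natDegree :=
        (Finset.add_sum_erase _ _ (Finset.mem_univ _)).symm
    _ ≤ 0 + ∑ l ∈ Finset.univ.erase (σ.symm j), 1 := by
        refine add_le_add (le_of_eq hs) (Finset.sum_le_sum fun l hl => ?_)
        exact hb l (Finset.mem_erase.mp hl).1
    _ ≤ n - 1 := by
        rw [zero_add, Finset.sum_const, smul_eq_mul, mul_one,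
          Finset.card_erase_of_mem (Finset.mem_univ _)]
        simp

lemma coeff_adj_rec (A : Matrix (Fin n) (Fin n) ℝ) (d : ℕ) (i j : Fin n) :
    ((adjugate (charmatrix A)) i j).coeff d
      = (∑ l, A i l * ((adjugate (charmatrix A)) l j).coeff (d + 1))
        + A.charpoly.coeff (d + 1) * (if i = j then 1 else 0) := by
  have hmul := Matrix.mul_adjugate (charmatrix A)
  have hentry : (charmatrix A * adjugate (charmatrix A)) i j
      = X * (adjugate (charmatrix A)) i j
        - ∑ l, C (A i l) * (adjugate (charmatrix A)) l j := by
    rw [mul_apply]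
    have : ∀ l, charmatrix A i l * (adjugate (charmatrix A)) l j
        = (if i = l then X else 0) * (adjugate (charmatrix A)) l j
          - C (A i l) * (adjugate (charmatrix A)) l j := by
      intro l
      rw [charmatrix_apply, diagonal_apply, sub_mul]
    simp only [this]
    rw [Finset.sum_sub_distrib]
    congr 1
    simp only [ite_mul, zero_mul]
    rw [Finset.sum_ite_eq (Finset.univ : Finset (Fin n)) i
      (fun l => X * (adjugate (charmatrix A)) l j)]
    simp
  have hrhs : (charmatrix A * adjugate (charmatrix A)) i j
      = A.charpoly * (if i = j then 1 else 0) := by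
    rw [hmul, Matrix.smul_apply, Matrix.one_apply, Matrix.charpoly]
    simp [smul_eq_mul, mul_ite]
  have h := congrArg (fun p => Polynomial.coeff p (d + 1)) (hentry.symm.trans hrhs)
  simp only [coeff_sub, coeff_X_mul, finset_sum_coeff, coeff_C_mul] at h
  by_cases hij : i = j
  · subst hij
    simp at h ⊢
    linarith [h]
  · simp only [if_neg hij, mul_zero, coeff_zero, add_zero] at h ⊢
    linarith [h]

end Crux

lemma crux (A : Matrix (Fin n) (Fin n) ℝ) (hA : A.IsHermitian) (k : ℕ) (hk1 : 1 ≤ k)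
    (hkn : k ≤ n) :
    ∀ i j, ((adjugate (charmatrix A)) i j).coeff (n - k)
      = (-1 : ℝ) ^ (k - 1) * newton (k - 1) A i j := by
  induction k, hk1 using Nat.le_induction with
  | base =>
    intro i j
    have hn : 1 ≤ n := hkn
    have hrec := coeff_adj_rec A (n - 1) i j
    rw [Nat.sub_add_cancel hn] at hrec
    have hzero : ∀ l, ((adjugate (charmatrix A)) l j).coeff n = 0 := fun l =>
      coeff_eq_zero_of_natDegree_lt (lt_of_le_of_lt (natDegree_adj_charmatrix_le A l j)
        (by omega))
    have hcoeffn : A.charpoly.coeff n = 1 := by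
      have h := (Matrix.charpoly_monic A).coeff_natDegree
      rwa [Matrix.charpoly_natDegree_eq_dim, Fintype.card_fin] at h
    simp only [hzero, mul_zero, Finset.sum_const_zero, zero_add, hcoeffn, one_mul] at hrec
    rw [hrec]
    simp [newton, msigma_zero A hA, Matrix.one_apply]
  | succ k hk ih =>
    intro i j
    have hkn' : k ≤ n := by omega
    have hrec := coeff_adj_rec A (n - (k + 1)) i j
    have hd : n - (k + 1) + 1 = n - k := by omega
    rw [hd] at hrec
    have hcp : A.charpoly.coeff (n - k) = (-1 : ℝ) ^ k * msigma k A := by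
      rw [msigma_eq_coeff hkn' A hA, ← mul_assoc, ← mul_pow]
      simp
    have hihs : ∀ l, ((adjugate (charmatrix A)) l j).coeff (n - k)
        = (-1 : ℝ) ^ (k - 1) * newton (k - 1) A l j := fun l => ih hkn' l j
    rw [hrec]
    simp only [hihs, hcp]
    have hnew := newton_succ (k - 1) A
    rw [Nat.sub_add_cancel hk] at hnew
    rw [Nat.add_sub_cancel, hnew]
    have e1 : ∑ l, A i l * ((-1 : ℝ) ^ (k - 1) * newton (k - 1) A l j)
        = (-1 : ℝ) ^ (k - 1) * (A * newton (k - 1) A) i j := by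
      rw [Matrix.mul_apply, Finset.mul_sum]
      exact Finset.sum_congr rfl fun l _ => by ring
    rw [e1]
    have e2 : (-1 : ℝ) ^ k = -(-1 : ℝ) ^ (k - 1) := by
      conv_lhs => rw [← Nat.sub_add_cancel hk]
      rw [pow_succ]
      ring
    rw [e2, Matrix.sub_apply, Matrix.smul_apply, Matrix.one_apply]
    by_cases hij : i = j <;> simp [hij] <;> ring

lemma coeff_adj_zero (A : Matrix (Fin n) (Fin n) ℝ) (i j : Fin n) :
    (∑ l, A i l * ((adjugate (charmatrix A)) l j).coeff 0)
      + A.charpoly.coeff 0 * (if i = j then 1 else 0) = 0 := by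
  have hmul := Matrix.mul_adjugate (charmatrix A)
  have hentry : (charmatrix A * adjugate (charmatrix A)) i j
      = X * (adjugate (charmatrix A)) i j
        - ∑ l, C (A i l) * (adjugate (charmatrix A)) l j := by
    rw [mul_apply]
    have : ∀ l, charmatrix A i l * (adjugate (charmatrix A)) l j
        = (if i = l then X else 0) * (adjugate (charmatrix A)) l j
          - C (A i l) * (adjugate (charmatrix A)) l j := by
      intro l
      rw [charmatrix_apply, diagonal_apply, sub_mul]
    simp only [this]
    rw [Finset.sum_sub_distrib]
    congr 1
    simp only [ite_mul, zero_mul]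
    rw [Finset.sum_ite_eq (Finset.univ : Finset (Fin n)) i
      (fun l => X * (adjugate (charmatrix A)) l j)]
    simp
  have hrhs : (charmatrix A * adjugate (charmatrix A)) i j
      = A.charpoly * (if i = j then 1 else 0) := by
    rw [hmul, Matrix.smul_apply, Matrix.one_apply, Matrix.charpoly]
    simp [smul_eq_mul, mul_ite]
  have h := congrArg (fun p => Polynomial.coeff p 0) (hentry.symm.trans hrhs)
  simp only [coeff_sub, mul_coeff_zero, coeff_X_zero, zero_mul, finset_sum_coeff,
    coeff_C_mul, coeff_C_zero] at h
  by_cases hij : i = j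
  · subst hij
    simp at h ⊢
    linarith [h]
  · simp only [if_neg hij, mul_zero, coeff_zero, add_zero] at h ⊢
    linarith [h]

lemma newton_dim_eq_zero (A : Matrix (Fin n) (Fin n) ℝ) (hA : A.IsHermitian) :
    newton n A = 0 := by
  rcases Nat.eq_zero_or_pos n with hn | hn
  · subst hn
    ext i j
    exact absurd i.2 (by omega)
  · have hnew := newton_succ (n - 1) A
    rw [Nat.sub_add_cancel hn] at hnew
    rw [hnew, sub_eq_zero]
    refine Matrix.ext fun i j => ?_
    have h0 := coeff_adj_zero A i j
    have hnn : n - n = 0 := Nat.sub_self n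
    have hG : ∀ l, ((adjugate (charmatrix A)) l j).coeff 0
        = (-1 : ℝ) ^ (n - 1) * newton (n - 1) A l j := by
      intro l
      have := crux A hA n hn le_rfl l j
      rwa [hnn] at this
    have hcp : A.charpoly.coeff 0 = (-1 : ℝ) ^ n * msigma n A := by
      have h := msigma_eq_coeff (le_refl n) A hA
      rw [hnn] at h
      rw [h, ← mul_assoc, ← mul_pow]
      simp
    simp only [hG, hcp] at h0
    have e1 : ∑ l, A i l * ((-1 : ℝ) ^ (n - 1) * newton (n - 1) A l j)
        = (-1 : ℝ) ^ (n - 1) * (A * newton (n - 1) A) i j := by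
      rw [Matrix.mul_apply, Finset.mul_sum]
      exact Finset.sum_congr rfl fun l _ => by ring
    rw [e1] at h0
    have e2 : (-1 : ℝ) ^ n = -(-1 : ℝ) ^ (n - 1) := by
      conv_lhs => rw [← Nat.sub_add_cancel hn]
      rw [pow_succ]
      ring
    rw [e2] at h0
    have hpow : ((-1 : ℝ) ^ (n - 1)) ≠ 0 := pow_ne_zero _ (by norm_num)
    rw [Matrix.smul_apply, Matrix.one_apply]
    by_cases hij : i = j
    · subst hij
      simp only [eq_self_iff_true, if_true, smul_eq_mul, mul_one] at h0 ⊢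
      have hc : (-1 : ℝ) ^ (n - 1) * ((A * newton (n - 1) A) i i)
          = (-1 : ℝ) ^ (n - 1) * msigma n A := by linear_combination h0
      exact (mul_left_cancel₀ hpow hc).symm
    · simp only [if_neg hij, smul_eq_mul, mul_zero, add_zero] at h0 ⊢
      have hc : (-1 : ℝ) ^ (n - 1) * ((A * newton (n - 1) A) i j)
          = (-1 : ℝ) ^ (n - 1) * 0 := by
        rw [mul_zero]; linear_combination h0
      exact (mul_left_cancel₀ hpow hc).symm

lemma newton_of_ge (A : Matrix (Fin n) (Fin n) ℝ) (hA : A.IsHermitian) {q : ℕ}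
    (hq : n ≤ q) : newton q A = 0 := by
  induction q, hq using Nat.le_induction with
  | base => exact newton_dim_eq_zero A hA
  | succ q hq ih =>
    rw [newton_succ q A, ih, Matrix.mul_zero, msigma_of_gt (by omega) A]
    simp


lemma det_updateRow_eq_sum_adjugate (M : Matrix (Fin n) (Fin n) ℝ) (i : Fin n) (r : Fin n → ℝ) :
    (M.updateRow i r).det = ∑ j, r j * adjugate M j i := by
  have h1 : (M.updateRow i r).det = cramer Mᵀ r i := by
    rw [cramer_apply, updateCol_transpose, det_transpose]
  have h2 : r = ∑ j, r j • (Pi.single j 1 : Fin n → ℝ) := by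
    ext j'
    simp [Pi.single_apply]
  rw [h1]
  conv_lhs => rw [h2, map_sum]
  rw [Finset.sum_apply]
  refine Finset.sum_congr rfl fun j _ => ?_
  rw [_root_.map_smul, Pi.smul_apply, smul_eq_mul]
  rw [adjugate_apply, cramer_apply, updateCol_transpose, det_transpose]

lemma sum_updateRow_det_eq (M B : Matrix (Fin n) (Fin n) ℝ) :
    ∑ i, (M.updateRow i (B i)).det = (adjugate M * B).trace := by
  simp only [det_updateRow_eq_sum_adjugate, Matrix.trace, Matrix.diag, mul_apply]
  rw [Finset.sum_comm]
  exact Finset.sum_congr rfl fun j _ => Finset.sum_congr rfl fun i _ => mul_comm _ _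

lemma hasDerivAt_det_path (M : ℝ → Matrix (Fin n) (Fin n) ℝ) (M' : Matrix (Fin n) (Fin n) ℝ)
    (t : ℝ) (hd : ∀ i j, HasDerivAt (fun s => M s i j) (M' i j) t) :
    HasDerivAt (fun s => (M s).det) ((adjugate (M t) * M').trace) t := by
  have hfun : (fun s => (M s).det)
      = fun s => ∑ σ : Equiv.Perm (Fin n), ((Equiv.Perm.sign σ : ℤ) : ℝ) * ∏ i, M s (σ i) i := by
    funext s; rw [det_apply']
  rw [hfun, ← sum_updateRow_det_eq]
  have key : ∀ σ : Equiv.Perm (Fin n),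
      HasDerivAt (fun s => ((Equiv.Perm.sign σ : ℤ) : ℝ) * ∏ i, M s (σ i) i)
        (((Equiv.Perm.sign σ : ℤ) : ℝ) *
          ∑ i, (∏ j ∈ Finset.univ.erase i, M t (σ j) j) • M' (σ i) i) t :=
    fun σ => (HasDerivAt.fun_finsetProd (fun i _ => hd (σ i) i)).const_mul _
  have hsum := HasDerivAt.fun_sum
    (fun σ (_ : σ ∈ (Finset.univ : Finset (Equiv.Perm (Fin n)))) => key σ)
  refine hsum.congr_deriv (Eq.symm ?_)
  have expand : ∀ i, ((M t).updateRow i (M' i)).det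
      = ∑ σ : Equiv.Perm (Fin n), ((Equiv.Perm.sign σ : ℤ) : ℝ)
          * ∏ j, ((M t).updateRow i (M' i)) (σ j) j := fun i => det_apply' _
  simp only [expand]
  rw [Finset.sum_comm]
  refine Finset.sum_congr rfl fun σ _ => ?_
  rw [Finset.mul_sum]
  refine Fintype.sum_equiv σ.symm _ _ fun i => ?_
  congr 1
  rw [← Finset.mul_prod_erase Finset.univ
      (fun j => ((M t).updateRow i (M' i)) (σ j) j) (Finset.mem_univ (σ.symm i))]
  rw [smul_eq_mul, mul_comm, Equiv.apply_symm_apply]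
  congr 1
  · refine Finset.prod_congr rfl fun j hj => ?_
    rw [updateRow_ne]
    intro h
    exact (Finset.mem_erase.mp hj).1 (by rw [← h, Equiv.symm_apply_apply])
  · rw [updateRow_self]

lemma coeff_eq_sum_eval (s₀ : Finset ℝ) (d : ℕ) (p : ℝ[X]) (hdeg : p.degree < s₀.card) :
    p.coeff d = ∑ x ∈ s₀, p.eval x * (Lagrange.basis s₀ id x).coeff d := by
  conv_lhs => rw [Lagrange.eq_interpolate (Set.injOn_id _) hdeg]
  rw [Lagrange.interpolate_apply, finset_sum_coeff]
  exact Finset.sum_congr rfl fun x _ => by rw [coeff_C_mul]; rfl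

/-- Differentiating `σ_k` along a differentiable path of symmetric matrices:
`d/dt σ_k(A(t)) = T_{k-1}(A(t))^i_j (d/dt A(t))^j_i = tr(T_{k-1}(A(t)) · A'(t))`. -/
theorem hasDerivAt_sigma {n k : ℕ} (hk : 1 ≤ k)
    (A : ℝ → Matrix (Fin n) (Fin n) ℝ) (A' : Matrix (Fin n) (Fin n) ℝ) (t : ℝ)
    (hsym : ∀ s, (A s).IsHermitian)
    (hd : ∀ i j, HasDerivAt (fun s => A s i j) (A' i j) t) :
    HasDerivAt (fun s => msigma k (A s)) ((newton (k - 1) (A t) * A').trace) t := by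
  rcases le_or_gt k n with hkn | hkn
  · -- main case : k ≤ n, so n ≥ 1
    have hn : 1 ≤ n := le_trans hk hkn
    set s₀ : Finset ℝ := (Finset.range (n + 1)).image (fun m : ℕ => (m : ℝ)) with hs₀
    have hcard : s₀.card = n + 1 := by
      rw [hs₀, Finset.card_image_of_injective _ Nat.cast_injective, Finset.card_range]
    set c : ℝ → ℝ := fun x => (Lagrange.basis s₀ id x).coeff (n - k) with hc
    have hrepr : (fun u => msigma k (A u)) = fun u => ∑ x ∈ s₀,
        (x • (1 : Matrix (Fin n) (Fin n) ℝ) - A u).det * ((-1 : ℝ) ^ k * c x) := by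
      funext u
      rw [msigma_eq_coeff hkn (A u) (hsym u)]
      rw [coeff_eq_sum_eval s₀ (n - k) ((A u).charpoly) (by
        rw [hcard, Matrix.charpoly_degree_eq_dim, Fintype.card_fin]
        exact_mod_cast lt_add_one n)]
      rw [Finset.mul_sum]
      refine Finset.sum_congr rfl fun x _ => ?_
      rw [eval_charpoly]
      ring
    have hderiv : ∀ x ∈ s₀, HasDerivAt (fun u =>
        (x • (1 : Matrix (Fin n) (Fin n) ℝ) - A u).det * ((-1 : ℝ) ^ k * c x))
        (((adjugate (x • (1 : Matrix (Fin n) (Fin n) ℝ) - A t)) * (-A')).trace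
          * ((-1 : ℝ) ^ k * c x)) t := by
      intro x _
      refine HasDerivAt.mul_const ?_ _
      refine hasDerivAt_det_path (fun u => x • (1 : Matrix (Fin n) (Fin n) ℝ) - A u) (-A') t
        (fun i j => ?_)
      have h1 : HasDerivAt (fun u => (x • (1 : Matrix (Fin n) (Fin n) ℝ)) i j - A u i j)
          (-(A' i j)) t := (hd i j).const_sub _
      have h2 : (fun u => (x • (1 : Matrix (Fin n) (Fin n) ℝ) - A u) i j)
          = fun u => (x • (1 : Matrix (Fin n) (Fin n) ℝ)) i j - A u i j := by
        funext u; rw [Matrix.sub_apply]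
      rw [h2, Matrix.neg_apply]
      exact h1
    have hsum := HasDerivAt.fun_sum hderiv
    rw [hrepr]
    refine hsum.congr_deriv (Eq.symm ?_)
    -- final algebra
    have hGdeg : ∀ i l, ((adjugate (charmatrix (A t))) i l).degree < s₀.card := by
      intro i l
      refine lt_of_le_of_lt (Polynomial.degree_le_natDegree) ?_
      rw [hcard]
      exact_mod_cast lt_of_le_of_lt (natDegree_adj_charmatrix_le (A t) i l) (by omega)
    have hadj : ∀ x : ℝ, adjugate (x • (1 : Matrix (Fin n) (Fin n) ℝ) - A t)
        = Matrix.of fun i l => eval x ((adjugate (charmatrix (A t))) i l) := by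
      intro x
      have hmap := RingHom.map_adjugate (evalRingHom x) (charmatrix (A t))
      have hcm : (evalRingHom x).mapMatrix (charmatrix (A t))
          = x • (1 : Matrix (Fin n) (Fin n) ℝ) - A t := by
        rw [RingHom.mapMatrix_apply]
        exact charmatrix_eval (A t) x
      rw [hcm] at hmap
      rw [← hmap, RingHom.mapMatrix_apply]
      rfl
    have key : ∀ i l, ∑ x ∈ s₀, eval x ((adjugate (charmatrix (A t))) i l) * c x
        = (-1 : ℝ) ^ (k - 1) * newton (k - 1) (A t) i l := by
      intro i l
      rw [← coeff_eq_sum_eval s₀ (n - k) _ (hGdeg i l)]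
      exact crux (A t) (hsym t) k hk hkn i l
    have tr_expand : ∀ (M N : Matrix (Fin n) (Fin n) ℝ),
        (M * N).trace = ∑ i, ∑ l, M i l * N l i := by
      intro M N
      simp [Matrix.trace, Matrix.diag, Matrix.mul_apply]
    have hsign : (-1 : ℝ) ^ (k - 1) * (-1 : ℝ) ^ k = -1 := by
      have hkk : k - 1 + k = 2 * (k - 1) + 1 := by omega
      rw [← pow_add, hkk, pow_succ, pow_mul]
      norm_num
    calc (newton (k - 1) (A t) * A').trace
        = ∑ i, ∑ l, newton (k - 1) (A t) i l * A' l i := tr_expand _ _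
      _ = ∑ i, ∑ l, ∑ x ∈ s₀,
          (eval x ((adjugate (charmatrix (A t))) i l) * (-A' l i)) * ((-1 : ℝ) ^ k * c x) := by
          refine Finset.sum_congr rfl fun i _ => Finset.sum_congr rfl fun l _ => ?_
          have : ∑ x ∈ s₀, (eval x ((adjugate (charmatrix (A t))) i l) * (-A' l i))
              * ((-1 : ℝ) ^ k * c x)
              = (∑ x ∈ s₀, eval x ((adjugate (charmatrix (A t))) i l) * c x)
                * ((-1 : ℝ) ^ k * (-A' l i)) := by
            rw [Finset.sum_mul]
            exact Finset.sum_congr rfl fun x _ => by ring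
          rw [this, key]
          rw [show ((-1 : ℝ) ^ (k - 1) * newton (k - 1) (A t) i l)
              * ((-1 : ℝ) ^ k * (-A' l i))
              = ((-1 : ℝ) ^ (k - 1) * (-1 : ℝ) ^ k) * (newton (k - 1) (A t) i l * (-A' l i))
            from by ring, hsign]
          ring
      _ = ∑ x ∈ s₀, ((adjugate (x • (1 : Matrix (Fin n) (Fin n) ℝ) - A t)) * (-A')).trace
            * ((-1 : ℝ) ^ k * c x) := by
          refine Eq.trans (Finset.sum_congr rfl fun i _ => Finset.sum_comm) ?_
          refine Eq.trans Finset.sum_comm ?_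
          refine Finset.sum_congr rfl fun x _ => ?_
          rw [tr_expand, Finset.sum_mul]
          refine Finset.sum_congr rfl fun i _ => ?_
          rw [Finset.sum_mul]
          refine Finset.sum_congr rfl fun l _ => ?_
          rw [hadj x]
          simp only [Matrix.of_apply, Matrix.neg_apply]
  · -- degenerate case : k > n
    have h0 : (fun u => msigma k (A u)) = fun _ => (0 : ℝ) :=
      funext fun u => msigma_of_gt hkn (A u)
    have hz : newton (k - 1) (A t) = 0 := newton_of_ge (A t) (hsym t) (by omega)
    rw [h0, hz, Matrix.zero_mul, Matrix.trace_zero]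
    exact hasDerivAt_const t 0
end MsigmaFacts
end

section
/- The cones Γ_k^+ are nested: Γ_n^+ ⊂ Γ_{n−1}^+ ⊂ ... ⊂ Γ_1^+, where Γ_k^+ is the connected component of {σ_k > 0} in ℝ^n containing the positive cone. -/
open Matrix Finset

def Gamma (n k : ℕ) : Set (Fin n → ℝ) :=
  connectedComponentIn {x : Fin n → ℝ | 0 < esym n k x} (fun _ => 1)

lemma esym_zero_eq (n : ℕ) (x : Fin n → ℝ) : esym n 0 x = 1 := by
  simp [esym]

lemma my_esymm_pos (s : Multiset ℝ) (h : ∀ a ∈ s, 0 < a) {j : ℕ}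
    (hj : j ≤ Multiset.card s) : 0 < s.esymm j := by
  rw [Multiset.esymm]
  have hcard : Multiset.card (Multiset.powersetCard j s) = (Multiset.card s).choose j :=
    Multiset.card_powersetCard j s
  have hne : Multiset.powersetCard j s ≠ 0 := by
    intro h0
    rw [h0] at hcard
    simp only [Multiset.card_zero] at hcard
    have := Nat.choose_pos hj
    omega
  obtain ⟨t, ht⟩ := Multiset.exists_mem_of_ne_zero hne
  have hpos : ∀ p ∈ (Multiset.powersetCard j s).map Multiset.prod, 0 < p := by
    intro p hp
    obtain ⟨t', ht', rfl⟩ := Multiset.mem_map.mp hp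
    have hle := (Multiset.mem_powersetCard.mp ht').1
    exact Multiset.prod_pos fun a ha => h a (Multiset.mem_of_le hle ha)
  calc (0:ℝ) < t.prod := hpos _ (Multiset.mem_map_of_mem _ ht)
    _ ≤ _ := Multiset.single_le_sum (fun p hp => (hpos p hp).le) _
        (Multiset.mem_map_of_mem _ ht)

open Polynomial in
lemma key {n k : ℕ} (hkn : k + 1 ≤ n) (x : Fin n → ℝ)
    (h0 : ∀ j ≤ k, 0 ≤ esym n j x) (h1 : 0 < esym n (k + 1) x) :
    ∀ j ≤ k + 1, 0 < esym n j x := by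
  obtain ⟨d, rfl⟩ := Nat.exists_eq_add_of_le hkn
  set P : Polynomial ℝ := ∏ i : Fin (k + 1 + d), (X + C (x i)) with hP
  have hcardu : #(Finset.univ : Finset (Fin (k + 1 + d))) = k + 1 + d := by
    simp
  have hPcoeff : ∀ m ≤ k + 1 + d, P.coeff m = esym (k + 1 + d) (k + 1 + d - m) x := by
    intro m hm
    rw [hP, Finset.prod_X_add_C_coeff _ _ (by rw [hcardu]; exact hm)]
    simp only [esym]
    rw [hcardu]
  have hmonic : P.Monic := monic_prod_of_monic _ _ fun i _ => monic_X_add_C _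
  have hroots_lin : ∀ a : ℝ, (X + C a).roots = {-a} := by
    intro a
    rw [show X + C a = X - C (-a) by rw [map_neg, sub_neg_eq_add], roots_X_sub_C]
  have hProots : Multiset.card P.roots = k + 1 + d := by
    rw [hP, roots_prod _ _ hmonic.ne_zero]
    simp [hroots_lin]
  set g : Polynomial ℝ := derivative^[d] P with hg
  have hgc : ∀ m, g.coeff m = ((m + d).descFactorial d : ℝ) * P.coeff (m + d) := by
    intro m
    rw [hg, Polynomial.coeff_iterate_derivative, nsmul_eq_mul]
  have hdesc : ∀ m : ℕ, (0:ℝ) < ((m + d).descFactorial d : ℝ) := by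
    intro m
    have : (m + d).descFactorial d ≠ 0 := by
      rw [Ne, Nat.descFactorial_eq_zero_iff_lt]
      omega
    exact_mod_cast Nat.pos_of_ne_zero this
  have hgcoeff : ∀ m ≤ k + 1,
      g.coeff m = ((m + d).descFactorial d : ℝ) * esym (k + 1 + d) (k + 1 - m) x := by
    intro m hm
    rw [hgc m, hPcoeff (m + d) (by omega)]
    congr 2
    omega
  have hgtop : g.coeff (k + 1) = ((k + 1 + d).descFactorial d : ℝ) := by
    rw [hgcoeff (k + 1) le_rfl]
    simp [esym_zero_eq]
  have hgne : g ≠ 0 := by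
    intro h
    rw [h, coeff_zero] at hgtop
    exact absurd hgtop.symm (ne_of_gt (hdesc (k + 1)))
  have hdegle : g.natDegree ≤ k + 1 := by
    have := Polynomial.natDegree_iterate_derivative P d
    have hPd : P.natDegree = k + 1 + d := by
      rw [hP, natDegree_prod _ _ (fun i _ => X_add_C_ne_zero (x i))]
      simp [natDegree_X_add_C]
    rw [hPd] at this
    rw [hg]
    omega
  have hdegge : k + 1 ≤ g.natDegree :=
    le_natDegree_of_ne_zero (by rw [hgtop]; exact ne_of_gt (hdesc (k + 1)))
  have hgdeg : g.natDegree = k + 1 := le_antisymm hdegle hdegge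
  -- root count
  have hrootsge : ∀ j : ℕ, k + 1 + d - j ≤ Multiset.card (derivative^[j] P).roots := by
    intro j
    induction j with
    | zero => simpa using hProots.ge
    | succ j ih =>
      have h2 := Polynomial.card_roots_le_derivative (derivative^[j] P)
      rw [← Function.iterate_succ_apply' (⇑derivative) j P] at h2
      simp only [Nat.succ_eq_add_one] at h2
      omega
  have hrcard : Multiset.card g.roots = k + 1 := by
    have h1' := hrootsge d
    rw [← hg] at h1'
    have h2' := Polynomial.card_roots' g
    rw [hgdeg] at h2'
    omega
  -- evaluation positivity
  have hesym_nonneg : ∀ m ≤ k + 1, 0 ≤ esym (k + 1 + d) m x := by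
    intro m hm
    rcases Nat.lt_or_ge m (k + 1) with h | h
    · exact h0 m (by omega)
    · have : m = k + 1 := by omega
      rw [this]; exact h1.le
  have heval : ∀ t : ℝ, 0 ≤ t → 0 < g.eval t := by
    intro t ht
    rw [Polynomial.eval_eq_sum_range' (show g.natDegree < k + 2 by omega)]
    apply Finset.sum_pos'
    · intro m hm
      have hm' : m ≤ k + 1 := by
        have := Finset.mem_range.mp hm; omega
      rw [hgcoeff m hm']
      have := hesym_nonneg (k + 1 - m) (by omega)
      positivity
    · refine ⟨0, Finset.mem_range.mpr (by omega), ?_⟩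
      rw [hgcoeff 0 (by omega)]
      simp only [pow_zero, mul_one, Nat.sub_zero]
      exact mul_pos (hdesc 0) h1
  have hneg : ∀ r ∈ g.roots, r < 0 := by
    intro r hr
    by_contra hcon
    push_neg at hcon
    have h2 := (Polynomial.isRoot_of_mem_roots hr)
    have h3 := heval r hcon
    rw [Polynomial.IsRoot] at h2
    linarith
  have hsplit : g = C g.leadingCoeff * (g.roots.map fun a => X - C a).prod :=
    (Polynomial.C_leadingCoeff_mul_prod_multiset_X_sub_C (hrcard.trans hgdeg.symm)).symm
  have hlc : 0 < g.leadingCoeff := by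
    rw [Polynomial.leadingCoeff, hgdeg, hgtop]
    exact hdesc (k + 1)
  have hprod_eq : (g.roots.map fun a => X - C a) =
      ((g.roots.map fun a => -a).map fun a => X + C a) := by
    rw [Multiset.map_map]
    apply Multiset.map_congr rfl
    intro a _
    simp [sub_eq_add_neg]
  have hcpos : ∀ m ≤ k + 1, 0 < g.coeff m := by
    intro m hm
    conv_lhs => rw [show (0:ℝ) = 0 from rfl]
    rw [hsplit, Polynomial.coeff_C_mul, hprod_eq]
    have hcards : Multiset.card (g.roots.map fun a => -a) = k + 1 := by
      rw [Multiset.card_map, hrcard]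
    rw [Multiset.prod_X_add_C_coeff _ (by rw [hcards]; exact hm)]
    apply mul_pos hlc
    apply my_esymm_pos
    · intro a ha
      obtain ⟨r, hr, rfl⟩ := Multiset.mem_map.mp ha
      have := hneg r hr
      linarith
    · rw [hcards]
      omega
  intro j hj
  have := hcpos (k + 1 - j) (by omega)
  rw [hgcoeff (k + 1 - j) (by omega)] at this
  have hd := hdesc (k + 1 - j)
  have hjj : k + 1 - (k + 1 - j) = j := by omega
  rw [hjj] at this
  nlinarith

lemma esym_continuous (n j : ℕ) : Continuous (esym n j) := by
  unfold esym
  exact continuous_finset_sum _ fun s _ => continuous_finset_prod _ fun i _ => continuous_apply i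

lemma esym_one_pos (n j : ℕ) (hj : j ≤ n) : 0 < esym n j (fun _ => 1) := by
  unfold esym
  simp only [Finset.prod_const_one, Finset.sum_const, Finset.card_powersetCard,
    Finset.card_univ, Fintype.card_fin, nsmul_eq_mul, mul_one]
  exact_mod_cast Nat.choose_pos hj

/-- The cones are nested: `Γ_n^+ ⊆ Γ_{n-1}^+ ⊆ ⋯ ⊆ Γ_1^+`. -/
theorem Gamma_nested (n : ℕ) : ∀ k : ℕ, 1 ≤ k → k + 1 ≤ n → Gamma n (k + 1) ⊆ Gamma n k := by
  intro k hk hkn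
  set U : Set (Fin n → ℝ) := ⋂ j ∈ Finset.range (k + 2), {y | 0 < esym n j y} with hU
  set Cs : Set (Fin n → ℝ) := ⋂ j ∈ Finset.range (k + 2), {y | 0 ≤ esym n j y} with hCs
  have hUopen : IsOpen U :=
    isOpen_biInter_finset fun j _ => isOpen_lt continuous_const (esym_continuous n j)
  have hCclosed : IsClosed Cs :=
    isClosed_biInter fun j _ => isClosed_le continuous_const (esym_continuous n j)
  have hone : (fun _ => (1:ℝ) : Fin n → ℝ) ∈ {x : Fin n → ℝ | 0 < esym n (k + 1) x} :=
    esym_one_pos n (k + 1) hkn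
  have hΓ1 : (fun _ => (1:ℝ) : Fin n → ℝ) ∈ Gamma n (k + 1) := mem_connectedComponentIn hone
  have hΓsub : Gamma n (k + 1) ⊆ {x : Fin n → ℝ | 0 < esym n (k + 1) x} :=
    connectedComponentIn_subset _ _
  have hcover : Gamma n (k + 1) ⊆ U ∪ Csᶜ := by
    intro y hy
    by_cases hyC : y ∈ Cs
    · left
      have h0 : ∀ j ≤ k, 0 ≤ esym n j y := fun j hj =>
        Set.mem_iInter₂.mp hyC j (Finset.mem_range.mpr (by omega))
      have hall := key hkn y h0 (hΓsub hy)
      exact Set.mem_iInter₂.mpr fun j hj => hall j (by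
        have := Finset.mem_range.mp hj; omega)
    · right; exact hyC
  have hdisj : Disjoint U Csᶜ := by
    rw [Set.disjoint_left]
    intro y hyU hyc
    exact hyc (Set.mem_iInter₂.mpr fun j hj => (show (0:ℝ) < esym n j y from Set.mem_iInter₂.mp hyU j hj).le)
  have h1U : (fun _ => (1:ℝ) : Fin n → ℝ) ∈ U :=
    Set.mem_iInter₂.mpr fun j hj =>
      esym_one_pos n j (by have := Finset.mem_range.mp hj; omega)
  have hΓU : Gamma n (k + 1) ⊆ U :=
    IsPreconnected.subset_left_of_subset_union hUopen hCclosed.isOpen_compl hdisj hcover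
      ⟨_, hΓ1, h1U⟩ isPreconnected_connectedComponentIn
  have hUF : U ⊆ {x : Fin n → ℝ | 0 < esym n k x} := fun y hy =>
    Set.mem_iInter₂.mp hy k (Finset.mem_range.mpr (by omega))
  exact isPreconnected_connectedComponentIn.subset_connectedComponentIn hΓ1 (hΓU.trans hUF)
end

section
/- Let A and B be symmetric n×n matrices with A positive semi-definite, B ∈ Γ_k^+, and A + B ∈ Γ_k^+. Then σ_k(A + B) ≥ σ_k(B). -/
open Matrix Finset

/-- A symmetric matrix lies in `Γ_k^+` if its eigenvalue vector does. -/
def inGamma (n k : ℕ) (A : Matrix (Fin n) (Fin n) ℝ) : Prop :=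
  ∃ h : A.IsHermitian, h.eigenvalues ∈ Gamma n k


namespace SG

open Polynomial Multiset Finset Matrix




/-- Localized Rolle: number of roots (with multiplicity) in a "betweenness-closed" predicate. -/
theorem card_roots_filter_toFinset_le (p : ℝ[X]) (pr : ℝ → Prop) [DecidablePred pr]
    (hpr : ∀ x y z : ℝ, pr x → pr y → x < z → z < y → pr z) :
    ((p.roots.toFinset.filter pr)).card ≤
      (((derivative p).roots.toFinset.filter pr) \ (p.roots.toFinset.filter pr)).card + 1 := by
  rcases eq_or_ne (derivative p) 0 with hp' | hp'
  · rw [eq_C_of_derivative_eq_zero hp', roots_C]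
    simp
  have hp : p ≠ 0 := ne_of_apply_ne derivative (by rwa [derivative_zero])
  refine Finset.card_le_diff_of_interleaved fun x hx y hy hxy _ => ?_
  rw [Finset.mem_filter, Multiset.mem_toFinset, mem_roots hp] at hx hy
  obtain ⟨z, hz1, hz2⟩ := exists_deriv_eq_zero hxy p.continuousOn (hx.1.trans hy.1.symm)
  refine ⟨z, ?_, hz1⟩
  rw [Finset.mem_filter, Multiset.mem_toFinset, mem_roots hp']
  exact ⟨by rwa [IsRoot, ← p.deriv], hpr x y z hx.2 hy.2 hz1.1 hz1.2⟩

theorem card_roots_filter_le (p : ℝ[X]) (pr : ℝ → Prop) [DecidablePred pr]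
    (hpr : ∀ x y z : ℝ, pr x → pr y → x < z → z < y → pr z) :
    Multiset.card (p.roots.filter pr) ≤
      Multiset.card ((derivative p).roots.filter pr) + 1 := by
  set F := p.roots.toFinset.filter pr with hF
  set F' := (derivative p).roots.toFinset.filter pr with hF'
  calc
    Multiset.card (p.roots.filter pr) = ∑ x ∈ F, (p.roots.filter pr).count x := by
      rw [hF, ← Multiset.toFinset_filter, Multiset.toFinset_sum_count_eq]
    _ = ∑ x ∈ F, p.roots.count x := by
      refine Finset.sum_congr rfl fun x hx => ?_
      rw [Multiset.count_filter_of_pos (Finset.mem_filter.1 hx).2]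
    _ = ∑ x ∈ F, ((p.roots.count x - 1) + 1) := by
      refine Finset.sum_congr rfl fun x hx => ?_
      have : 1 ≤ p.roots.count x :=
        Multiset.count_pos.2 (Multiset.mem_toFinset.1 (Finset.mem_filter.1 hx).1)
      omega
    _ = (∑ x ∈ F, (p.roots.count x - 1)) + F.card := by
      rw [Finset.sum_add_distrib, Finset.card_eq_sum_ones]
    _ ≤ (∑ x ∈ F, (derivative p).roots.count x) + ((F' \ F).card + 1) := by
      refine add_le_add (Finset.sum_le_sum fun x _ => ?_)
        (card_roots_filter_toFinset_le p pr hpr)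
      rw [count_roots, count_roots]
      exact rootMultiplicity_sub_one_le_derivative_rootMultiplicity _ _
    _ ≤ (∑ x ∈ F, (derivative p).roots.count x) +
          ((∑ x ∈ F' \ F, (derivative p).roots.count x) + 1) := by
      refine add_le_add_right (add_le_add_left ?_ 1) _
      refine (Finset.card_eq_sum_ones _).trans_le (Finset.sum_le_sum fun x hx => ?_)
      have hx' := (Finset.mem_filter.1 (Finset.mem_sdiff.1 hx).1).1
      exact Multiset.count_pos.2 (Multiset.mem_toFinset.1 hx')
    _ = (∑ x ∈ F ∪ (F' \ F), (derivative p).roots.count x) + 1 := by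
      rw [Finset.sum_union Finset.disjoint_sdiff, add_assoc]
    _ ≤ (∑ x ∈ F', (derivative p).roots.count x) + 1 := by
      refine add_le_add_left ?_ 1
      rw [← Finset.sum_filter_add_sum_filter_not (F ∪ (F' \ F)) (· ∈ F')]
      have h0 : ∀ x ∈ (F ∪ (F' \ F)).filter (· ∉ F'), (derivative p).roots.count x = 0 := by
        intro x hx
        obtain ⟨hx1, hx2⟩ := Finset.mem_filter.1 hx
        rcases Finset.mem_union.1 hx1 with h | h
        · rw [Multiset.count_eq_zero]
          intro hmem
          exact hx2 (Finset.mem_filter.2 ⟨Multiset.mem_toFinset.2 hmem,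
            (Finset.mem_filter.1 h).2⟩)
        · exact absurd (Finset.mem_sdiff.1 h).1 hx2
      rw [Finset.sum_eq_zero h0, add_zero]
      refine Finset.sum_le_sum_of_subset (fun x hx => (Finset.mem_filter.1 hx).2)
    _ = Multiset.card ((derivative p).roots.filter pr) + 1 := by
      congr 1
      rw [← Multiset.toFinset_sum_count_eq ((derivative p).roots.filter pr),
        Multiset.toFinset_filter]
      exact Finset.sum_congr rfl fun x hx =>
        (Multiset.count_filter_of_pos (Finset.mem_filter.1 hx).2).symm



/-- derivative of a real-rooted polynomial of positive degree -/
theorem derivative_rr {p : ℝ[X]} (hd : 0 < p.natDegree)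
    (hrr : Multiset.card p.roots = p.natDegree) :
    (derivative p) ≠ 0 ∧ (derivative p).natDegree = p.natDegree - 1 ∧
      Multiset.card (derivative p).roots = p.natDegree - 1 := by
  have hne : derivative p ≠ 0 := by
    intro h
    have := eq_C_of_derivative_eq_zero h
    rw [this, natDegree_C] at hd
    omega
  have h1 : p.natDegree - 1 ≤ Multiset.card (derivative p).roots := by
    have := p.card_roots_le_derivative
    omega
  have h2 : Multiset.card (derivative p).roots ≤ (derivative p).natDegree :=
    (derivative p).card_roots' 
  have h3 : (derivative p).natDegree ≤ p.natDegree - 1 := natDegree_derivative_le p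
  exact ⟨hne, by omega, by omega⟩

theorem iterate_derivative_rr {p : ℝ[X]} (hrr : Multiset.card p.roots = p.natDegree)
    (hp : p ≠ 0) (m : ℕ) (hm : m ≤ p.natDegree) :
    (derivative^[m] p) ≠ 0 ∧ (derivative^[m] p).natDegree = p.natDegree - m ∧
      Multiset.card (derivative^[m] p).roots = p.natDegree - m := by
  induction m with
  | zero => exact ⟨hp, by simp, by simpa⟩
  | succ l ih =>
    obtain ⟨h0, h1, h2⟩ := ih (by omega)
    have hd : 0 < (derivative^[l] p).natDegree := by omega
    obtain ⟨g0, g1, g2⟩ := derivative_rr hd (h2.trans h1.symm)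
    rw [Function.iterate_succ_apply']
    exact ⟨g0, by omega, by omega⟩

theorem multiset_prod_pos {s : Multiset ℝ} (h : ∀ x ∈ s, 0 < x) : 0 < s.prod := by
  induction s using Multiset.induction with
  | empty => simp
  | cons a s ih =>
    rw [Multiset.prod_cons]
    exact mul_pos (h a (mem_cons_self a s)) (ih fun x hx => h x (mem_cons_of_mem hx))

/-- a real-rooted polynomial with positive leading coefficient and all roots
negative is positive at nonnegative arguments -/
theorem eval_pos_of_roots_neg {p : ℝ[X]} (hrr : Multiset.card p.roots = p.natDegree)
    (hl : 0 < p.leadingCoeff) (hroots : ∀ r ∈ p.roots, r < 0) {x : ℝ} (hx : 0 ≤ x) :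
    0 < p.eval x := by
  conv_rhs => rw [← C_leadingCoeff_mul_prod_multiset_X_sub_C hrr]
  rw [eval_mul, eval_C, eval_multiset_prod]
  refine mul_pos hl (multiset_prod_pos ?_)
  intro y hy
  rw [Multiset.map_map, Multiset.mem_map] at hy
  obtain ⟨r, hr, rfl⟩ := hy
  simp only [Function.comp_apply, eval_sub, eval_X, eval_C]
  have := hroots r hr
  linarith

/-- parity of the number of roots above a non-root point where the polynomial is positive -/
theorem even_card_roots_gt {p : ℝ[X]} (hrr : Multiset.card p.roots = p.natDegree)
    (hl : 0 < p.leadingCoeff) {c : ℝ} (hc : 0 < p.eval c) :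
    Even (Multiset.card (p.roots.filter (fun r => c < r))) := by
  have key : ∀ s : Multiset ℝ, (s.map (fun r => c - r)).prod ≠ 0 →
      (0 < (s.map (fun r => c - r)).prod ↔
        Even (Multiset.card (s.filter (fun r => c < r)))) := by
    intro s
    induction s using Multiset.induction with
    | empty => intro _; simpa using even_zero
    | cons a s ih =>
      intro hne
      rw [Multiset.map_cons, Multiset.prod_cons] at hne ⊢
      have h1 : (c - a) ≠ 0 := left_ne_zero_of_mul hne
      have h2 : (Multiset.map (fun r => c - r) s).prod ≠ 0 := right_ne_zero_of_mul hne
      rw [Multiset.filter_cons]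
      by_cases hca : c < a
      · have hneg : c - a < 0 := by linarith
        rw [if_pos hca, Multiset.card_add, Multiset.card_singleton, add_comm,
          Nat.even_add_one]
        constructor
        · intro hpos he
          have hgt := (ih h2).2 he
          nlinarith
        · intro hnotev
          have hP : ¬ 0 < (Multiset.map (fun r => c - r) s).prod :=
            fun h => hnotev ((ih h2).1 h)
          have hP' : (Multiset.map (fun r => c - r) s).prod < 0 :=
            lt_of_le_of_ne (not_lt.1 hP) h2
          nlinarith
      · have hac : a < c := by
          rcases (not_lt.1 hca).lt_or_eq with h | h
          · exact h
          · exact absurd (by rw [h, sub_self]) h1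
        have hpos : 0 < c - a := by linarith
        rw [if_neg hca]
        have hiff : 0 < (c - a) * (Multiset.map (fun r => c - r) s).prod ↔
            0 < (Multiset.map (fun r => c - r) s).prod := by
          constructor <;> intro h <;> nlinarith
        rw [hiff, zero_add]
        exact ih h2
  have heval : p.eval c =
      p.leadingCoeff * (Multiset.map (fun r => c - r) p.roots).prod := by
    conv_lhs => rw [← C_leadingCoeff_mul_prod_multiset_X_sub_C hrr]
    rw [eval_mul, eval_C, eval_multiset_prod, Multiset.map_map]
    congr 1
    refine congrArg _ (Multiset.map_congr rfl fun r _ => ?_)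
    simp
  rw [heval] at hc
  have hprodpos : 0 < (Multiset.map (fun r => c - r) p.roots).prod := by nlinarith
  exact (key _ (ne_of_gt hprodpos)).1 hprodpos




theorem multiset_sum_pos {s : Multiset ℝ} (h : ∀ x ∈ s, 0 < x) (hne : s ≠ 0) :
    0 < s.sum := by
  induction s using Multiset.induction with
  | empty => exact absurd rfl hne
  | cons a s ih =>
    rw [Multiset.sum_cons]
    rcases eq_or_ne s 0 with rfl | hs
    · simpa using h a (mem_cons_self a 0)
    · exact add_pos (h a (mem_cons_self a s)) (ih (fun x hx => h x (mem_cons_of_mem hx)) hs)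

theorem multiset_prod_pos' {s : Multiset ℝ} (h : ∀ x ∈ s, 0 < x) : 0 < s.prod := by
  induction s using Multiset.induction with
  | empty => simp
  | cons a s ih =>
    rw [Multiset.prod_cons]
    exact mul_pos (h a (mem_cons_self a s)) (ih fun x hx => h x (mem_cons_of_mem hx))

variable {n : ℕ}

/-- the polynomial `∏_{i ∈ s} (X + x i)` -/
noncomputable def pF (s : Finset (Fin n)) (x : Fin n → ℝ) : ℝ[X] :=
  ∏ i ∈ s, (X + C (x i))

theorem pF_monic (s : Finset (Fin n)) (x : Fin n → ℝ) : (pF s x).Monic :=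
  monic_prod_of_monic _ _ fun i _ => monic_X_add_C (x i)

theorem pF_ne_zero (s : Finset (Fin n)) (x : Fin n → ℝ) : pF s x ≠ 0 :=
  (pF_monic s x).ne_zero

theorem natDegree_pF (s : Finset (Fin n)) (x : Fin n → ℝ) :
    (pF s x).natDegree = s.card := by
  rw [pF, natDegree_prod _ _ (fun i _ => X_add_C_ne_zero (x i))]
  simp [natDegree_X_add_C]

theorem roots_pF (s : Finset (Fin n)) (x : Fin n → ℝ) :
    (pF s x).roots = s.val.map (fun i => -(x i)) := by
  have : pF s x = ∏ i ∈ s, (X - C (-(x i))) := by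
    refine Finset.prod_congr rfl fun i _ => ?_
    rw [map_neg, sub_neg_eq_add]
  rw [this, Polynomial.roots_prod _ _ (by
    rw [← this]; exact pF_ne_zero s x)]
  simp only [roots_X_sub_C, Multiset.bind_singleton]

theorem card_roots_pF (s : Finset (Fin n)) (x : Fin n → ℝ) :
    Multiset.card (pF s x).roots = s.card := by
  rw [roots_pF, Multiset.card_map]
  rfl

theorem rr_pF (s : Finset (Fin n)) (x : Fin n → ℝ) :
    Multiset.card (pF s x).roots = (pF s x).natDegree := by
  rw [card_roots_pF, natDegree_pF]

theorem coeff_pF (s : Finset (Fin n)) (x : Fin n → ℝ) {j : ℕ} (hj : j ≤ s.card) :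
    (pF s x).coeff (s.card - j) = ∑ T ∈ Finset.powersetCard j s, ∏ i ∈ T, x i := by
  rw [pF, Finset.prod_X_add_C_coeff s x (Nat.sub_le _ _)]
  congr 2
  omega

theorem esym_eq_coeff (x : Fin n → ℝ) {j : ℕ} (hj : j ≤ n) :
    esym n j x = (pF Finset.univ x).coeff (n - j) := by
  have hcard : (Finset.univ : Finset (Fin n)).card = n := by simp
  have h := coeff_pF Finset.univ x (j := j) (by rw [hcard]; exact hj)
  rw [hcard] at h
  rw [esym, ← h]

theorem esym_zero_eq_one (x : Fin n → ℝ) : esym n 0 x = 1 := by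
  simp [esym]

/-- coefficients of the iterated derivative in terms of `esym` -/
theorem coeff_iter_deriv_pF (x : Fin n → ℝ) {j k : ℕ} (hj : j ≤ k) (hk : k ≤ n) :
    (derivative^[n - k] (pF Finset.univ x)).coeff (k - j) =
      ((n - j).descFactorial (n - k) : ℝ) * esym n j x := by
  rw [Polynomial.coeff_iterate_derivative, esym_eq_coeff x (le_trans hj hk)]
  have h1 : k - j + (n - k) = n - j := by omega
  rw [h1, nsmul_eq_mul]

theorem descFactorial_pos {a b : ℕ} (h : b ≤ a) : 0 < a.descFactorial b := by
  rcases Nat.eq_zero_or_pos (a.descFactorial b) with h0 | h0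
  · rw [Nat.descFactorial_eq_zero_iff_lt] at h0
    omega
  · exact h0

/-- bundled facts about `P := derivative^[n-k] (pF univ x)` -/
theorem Pm_facts (x : Fin n → ℝ) {k : ℕ} (hk : k ≤ n) :
    (derivative^[n - k] (pF Finset.univ x)) ≠ 0 ∧
    (derivative^[n - k] (pF Finset.univ x)).natDegree = k ∧
    Multiset.card (derivative^[n - k] (pF Finset.univ x)).roots = k ∧
    0 < (derivative^[n - k] (pF Finset.univ x)).leadingCoeff := by
  have hd : (pF Finset.univ x).natDegree = n := by
    rw [natDegree_pF]; simp
  obtain ⟨h0, h1, h2⟩ := iterate_derivative_rr (rr_pF Finset.univ x) (pF_ne_zero _ _)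
    (n - k) (by omega)
  rw [hd] at h1 h2
  have h1' : (derivative^[n - k] (pF Finset.univ x)).natDegree = k := by omega
  have h2' : Multiset.card (derivative^[n - k] (pF Finset.univ x)).roots = k := by omega
  refine ⟨h0, h1', h2', ?_⟩
  have hco := coeff_iter_deriv_pF x (Nat.zero_le k) hk
  rw [Nat.sub_zero, esym_zero_eq_one, mul_one] at hco
  have hlc : (derivative^[n - k] (pF Finset.univ x)).leadingCoeff =
      (derivative^[n - k] (pF Finset.univ x)).coeff k := by
    rw [Polynomial.leadingCoeff, h1']
  rw [hlc, hco]
  exact_mod_cast descFactorial_pos (by omega)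

/-- If the esyms up to `k` are nonneg and the `k`-th is positive, all roots of the
`(n-k)`-th derivative are negative. -/
theorem roots_neg_of_esym_nonneg (x : Fin n → ℝ) {k : ℕ} (h1 : 1 ≤ k) (hk : k ≤ n)
    (hnn : ∀ j, 1 ≤ j → j ≤ k → 0 ≤ esym n j x) (hpos : 0 < esym n k x) :
    ∀ r ∈ (derivative^[n - k] (pF Finset.univ x)).roots, r < 0 := by
  obtain ⟨h0, hdeg, hcard, hlc⟩ := Pm_facts x hk
  intro r hr
  by_contra hr0
  push_neg at hr0
  have heval : (derivative^[n - k] (pF Finset.univ x)).eval r = 0 :=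
    (mem_roots h0).1 hr
  have : 0 < (derivative^[n - k] (pF Finset.univ x)).eval r := by
    rw [Polynomial.eval_eq_sum_range'
      (by omega : (derivative^[n - k] (pF Finset.univ x)).natDegree < k + 1) r]
    refine Finset.sum_pos' (fun m hm => ?_) ⟨0, Finset.mem_range.2 (by omega), ?_⟩
    · rw [Finset.mem_range] at hm
      have hm' : m ≤ k := by omega
      have : (derivative^[n - k] (pF Finset.univ x)).coeff m =
          ((n - (k - m)).descFactorial (n - k) : ℝ) * esym n (k - m) x := by
        have := coeff_iter_deriv_pF x (j := k - m) (by omega) hk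
        rw [show k - (k - m) = m by omega] at this
        exact this
      rw [this]
      rcases Nat.eq_zero_or_pos (k - m) with hkm | hkm
      · rw [hkm, esym_zero_eq_one, mul_one]
        positivity
      · have := hnn (k - m) hkm (by omega)
        have hd : (0:ℝ) ≤ ((n - (k - m)).descFactorial (n - k) : ℝ) := by positivity
        positivity
    · have : (derivative^[n - k] (pF Finset.univ x)).coeff 0 =
          ((n - k).descFactorial (n - k) : ℝ) * esym n k x := by
        have := coeff_iter_deriv_pF x (j := k) le_rfl hk
        rw [Nat.sub_self] at this
        exact this
      rw [this, pow_zero, mul_one]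
      have hd : (0:ℝ) < ((n - k).descFactorial (n - k) : ℝ) := by
        exact_mod_cast descFactorial_pos le_rfl
      positivity
  rw [heval] at this
  exact lt_irrefl 0 this

/-- If all roots of the `(n-k)`-th derivative are negative, the esyms up to `k` are positive. -/
theorem esym_pos_of_roots_neg (x : Fin n → ℝ) {k : ℕ} (hk : k ≤ n)
    (hneg : ∀ r ∈ (derivative^[n - k] (pF Finset.univ x)).roots, r < 0) :
    ∀ j, 1 ≤ j → j ≤ k → 0 < esym n j x := by
  obtain ⟨h0, hdeg, hcard, hlc⟩ := Pm_facts x hk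
  intro j hj1 hjk
  set P := derivative^[n - k] (pF Finset.univ x) with hP
  have hrr : Multiset.card P.roots = P.natDegree := by rw [hcard, hdeg]
  have hco := Polynomial.coeff_eq_esymm_roots_of_card hrr
    (show k - j ≤ P.natDegree by rw [hdeg]; omega)
  rw [hdeg, show k - (k - j) = j by omega] at hco
  have hesymm : (-1 : ℝ) ^ j * P.roots.esymm j = (P.roots.map (fun r => -r)).esymm j := by
    rw [Multiset.esymm_neg]
  have hpos : 0 < (P.roots.map (fun r => -r)).esymm j := by
    refine multiset_sum_pos ?_ ?_
    · intro y hy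
      rw [Multiset.mem_map] at hy
      obtain ⟨t, ht, rfl⟩ := hy
      refine multiset_prod_pos' ?_
      intro a ha
      rw [Multiset.mem_powersetCard] at ht
      have := Multiset.mem_of_le ht.1 ha
      rw [Multiset.mem_map] at this
      obtain ⟨r, hr, rfl⟩ := this
      have := hneg r hr
      linarith
    · intro hzero
      have hc : Multiset.card
          ((Multiset.powersetCard j (P.roots.map (fun r => -r))).map Multiset.prod) =
            k.choose j := by
        rw [Multiset.card_map, Multiset.card_powersetCard, Multiset.card_map, hcard]
      rw [hzero] at hc
      simp only [Multiset.card_zero] at hc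
      have := Nat.choose_pos hjk
      omega
  have hcoeffpos : 0 < P.coeff (k - j) := by
    rw [hco, mul_comm P.leadingCoeff _, mul_assoc]
    have h1 : P.leadingCoeff * P.roots.esymm j * (-1:ℝ)^j =
        P.leadingCoeff * ((-1:ℝ)^j * P.roots.esymm j) := by ring
    nlinarith [hesymm, hpos, hlc]
  have hcoeff := coeff_iter_deriv_pF x hjk hk
  rw [← hP] at hcoeff
  rw [hcoeff] at hcoeffpos
  have hd : (0:ℝ) < ((n - j).descFactorial (n - k) : ℝ) := by
    exact_mod_cast descFactorial_pos (by omega)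
  nlinarith

/-- number of roots above a threshold does not increase under differentiation
(for real-rooted polynomials) -/
theorem card_filter_gt_derivative_le {p : ℝ[X]} (hd : 0 < p.natDegree)
    (hrr : Multiset.card p.roots = p.natDegree) (c : ℝ) :
    Multiset.card ((derivative p).roots.filter (fun r => c < r)) ≤
      Multiset.card (p.roots.filter (fun r => c < r)) := by
  obtain ⟨h0, h1, h2⟩ := derivative_rr hd hrr
  have part : ∀ q : ℝ[X], Multiset.card (q.roots.filter (fun r => c < r)) +
      Multiset.card (q.roots.filter (fun r => ¬ c < r)) = Multiset.card q.roots := by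
    intro q
    rw [← Multiset.card_add, Multiset.filter_add_not]
  have rolle := card_roots_filter_le p (fun r => ¬ c < r)
    (fun x y z hx hy hxz hzy => by push_neg at hx hy ⊢; linarith)
  have e1 := part p
  have e2 := part (derivative p)
  omega

def Gset (n k : ℕ) : Set (Fin n → ℝ) := {x | ∀ j, 1 ≤ j → j ≤ k → 0 < esym n j x}

theorem continuous_esym (n j : ℕ) : Continuous (esym n j) := by
  unfold esym
  exact continuous_finset_sum _ fun s _ =>
    continuous_finset_prod _ fun i _ => continuous_apply i

theorem isOpen_Gset (n k : ℕ) : IsOpen (Gset n k) := by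
  have h : Gset n k = ⋂ j ∈ Finset.Icc 1 k, {x : Fin n → ℝ | 0 < esym n j x} := by
    ext x
    simp only [Gset, Set.mem_setOf_eq, Set.mem_iInter, Finset.mem_Icc]
    constructor
    · intro hx j hj; exact hx j hj.1 hj.2
    · intro hx j h1 h2; exact hx j ⟨h1, h2⟩
  rw [h]
  exact isOpen_biInter_finset fun j _ => isOpen_lt continuous_const (continuous_esym n j)

theorem pF_shift (x : Fin n → ℝ) (t : ℝ) :
    pF Finset.univ (fun i => x i + t) = (pF Finset.univ x).comp (X + C t) := by
  rw [pF, pF, Polynomial.prod_comp]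
  refine Finset.prod_congr rfl fun i _ => ?_
  rw [add_comp, X_comp, C_comp, C_add]
  ring

theorem iterate_derivative_comp_shift (p : ℝ[X]) (t : ℝ) (m : ℕ) :
    derivative^[m] (p.comp (X + C t)) = (derivative^[m] p).comp (X + C t) := by
  induction m with
  | zero => simp
  | succ l ih =>
    rw [Function.iterate_succ_apply', ih, Function.iterate_succ_apply',
      Polynomial.derivative_comp]
    simp

theorem comp_shift_ne_zero {p : ℝ[X]} (hp : p ≠ 0) (t : ℝ) : p.comp (X + C t) ≠ 0 := by
  intro h
  apply hp
  have := congrArg (fun q => q.comp (X - C t)) h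
  simp only [zero_comp] at this
  rw [Polynomial.comp_assoc] at this
  simpa using this

theorem Gset_shift {k : ℕ} (h1 : 1 ≤ k) (hk : k ≤ n) {x : Fin n → ℝ}
    (hx : x ∈ Gset n k) {t : ℝ} (ht : 0 ≤ t) : (fun i => x i + t) ∈ Gset n k := by
  have hneg := roots_neg_of_esym_nonneg x h1 hk
    (fun j hj1 hjk => (hx j hj1 hjk).le) (hx k h1 le_rfl)
  have hkey : ∀ r ∈ (derivative^[n - k] (pF Finset.univ (fun i => x i + t))).roots,
      r < 0 := by
    intro r hr
    rw [pF_shift, iterate_derivative_comp_shift] at hr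
    have hP := (Pm_facts x hk).1
    have hne := comp_shift_ne_zero hP t
    have := (mem_roots hne).1 hr
    rw [IsRoot, eval_comp] at this
    simp only [eval_add, eval_X, eval_C] at this
    have hrt : (r + t) ∈ (derivative^[n - k] (pF Finset.univ x)).roots :=
      (mem_roots hP).2 this
    have := hneg _ hrt
    linarith
  exact fun j hj1 hjk => esym_pos_of_roots_neg _ hk hkey j hj1 hjk

theorem pos_mem_Gset {k : ℕ} (hk : k ≤ n) {x : Fin n → ℝ} (hx : ∀ i, 0 < x i) :
    x ∈ Gset n k := by
  intro j hj1 hjk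
  refine Finset.sum_pos (fun T hT => Finset.prod_pos fun i _ => hx i) ?_
  refine Finset.powersetCard_nonempty.2 ?_
  simpa using le_trans hjk hk

theorem mem_Gset_of_boundary {k : ℕ} (h1 : 1 ≤ k) (hk : k ≤ n) {x : Fin n → ℝ}
    (hnn : ∀ j, 1 ≤ j → j ≤ k → 0 ≤ esym n j x) (hpos : 0 < esym n k x) :
    x ∈ Gset n k :=
  fun j a b => esym_pos_of_roots_neg x hk (roots_neg_of_esym_nonneg x h1 hk hnn hpos) j a b

theorem closure_Gset_subset (n k : ℕ) : closure (Gset n k) ⊆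
    {x | ∀ j, 1 ≤ j → j ≤ k → 0 ≤ esym n j x} := by
  refine closure_minimal (fun x hx j a b => (hx j a b).le) ?_
  have h : {x : Fin n → ℝ | ∀ j, 1 ≤ j → j ≤ k → 0 ≤ esym n j x} =
      ⋂ j ∈ Finset.Icc 1 k, {x : Fin n → ℝ | 0 ≤ esym n j x} := by
    ext x
    simp only [Set.mem_setOf_eq, Set.mem_iInter, Finset.mem_Icc]
    constructor
    · intro hx j hj; exact hx j hj.1 hj.2
    · intro hx j a b; exact hx j ⟨a, b⟩
  rw [h]
  exact isClosed_biInter fun j _ => isClosed_le continuous_const (continuous_esym n j)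

theorem gamma_eq {k : ℕ} (h1 : 1 ≤ k) (hk : k ≤ n) :
    connectedComponentIn {x : Fin n → ℝ | 0 < esym n k x} (fun _ => 1) = Gset n k := by
  set Ω := {x : Fin n → ℝ | 0 < esym n k x} with hΩ
  have hΩopen : IsOpen Ω := isOpen_lt continuous_const (continuous_esym n k)
  have hone : (fun _ => (1:ℝ)) ∈ Gset n k := pos_mem_Gset hk (fun i => one_pos)
  have hGsub : Gset n k ⊆ Ω := fun x hx => hx k h1 le_rfl
  have honeΩ : (fun _ => (1:ℝ)) ∈ Ω := hGsub hone
  apply Set.Subset.antisymm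
  · have hVopen : IsOpen (Ω ∩ (closure (Gset n k))ᶜ) :=
      hΩopen.inter isClosed_closure.isOpen_compl
    refine IsPreconnected.subset_left_of_subset_union (isOpen_Gset n k) hVopen ?_ ?_ ?_
      (isPreconnected_connectedComponentIn)
    · rw [Set.disjoint_iff]
      rintro x ⟨hx1, hx2⟩
      exact absurd (subset_closure hx1) hx2.2
    · intro x hx
      have hxΩ : x ∈ Ω := connectedComponentIn_subset _ _ hx
      by_cases hcl : x ∈ closure (Gset n k)
      · exact Or.inl (mem_Gset_of_boundary h1 hk (closure_Gset_subset n k hcl) hxΩ)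
      · exact Or.inr ⟨hxΩ, hcl⟩
    · exact ⟨_, mem_connectedComponentIn honeΩ, hone⟩
  · intro x hx
    set T : ℝ := 1 + ∑ i, |x i| with hT
    have hT0 : 0 ≤ T := by
      have : 0 ≤ ∑ i, |x i| := Finset.sum_nonneg fun i _ => abs_nonneg _
      linarith
    have hxT : ∀ i, 0 < x i + T := by
      intro i
      have h1' : |x i| ≤ ∑ l, |x l| :=
        Finset.single_le_sum (fun l _ => abs_nonneg (x l)) (Finset.mem_univ i)
      have := neg_abs_le (x i)
      simp only [hT]
      linarith
    set c1 : Fin n → ℝ := fun i => x i + T with hc1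
    have hS1 : segment ℝ x c1 ⊆ Gset n k := by
      intro z hz
      obtain ⟨a, b, ha, hb, hab, rfl⟩ := hz
      have : a • x + b • c1 = fun i => x i + b * T := by
        funext i
        simp only [Pi.add_apply, Pi.smul_apply, smul_eq_mul, hc1]
        have : a = 1 - b := by linarith
        rw [this]; ring
      rw [this]
      exact Gset_shift h1 hk hx (by positivity)
    have hS2 : segment ℝ c1 (fun _ => (1:ℝ)) ⊆ Gset n k := by
      intro z hz
      obtain ⟨a, b, ha, hb, hab, rfl⟩ := hz
      refine pos_mem_Gset hk fun i => ?_
      simp only [Pi.add_apply, Pi.smul_apply, smul_eq_mul, hc1]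
      rcases eq_or_lt_of_le ha with rfl | ha'
      · simp only [zero_mul, zero_add] at hab ⊢
        rw [hab]; linarith
      · have := hxT i
        nlinarith
    have hpre : IsPreconnected (segment ℝ x c1 ∪ segment ℝ c1 (fun _ => (1:ℝ))) := by
      refine IsPreconnected.union c1 (right_mem_segment ℝ x c1)
        (left_mem_segment ℝ c1 _) ((convex_segment _ _).isPreconnected)
        ((convex_segment _ _).isPreconnected)
    have hsub : segment ℝ x c1 ∪ segment ℝ c1 (fun _ => (1:ℝ)) ⊆ Ω := by
      intro z hz
      rcases hz with hz | hz
      · exact hGsub (hS1 hz)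
      · exact hGsub (hS2 hz)
    have := hpre.subset_connectedComponentIn
      (Or.inr (right_mem_segment ℝ c1 (fun _ => (1:ℝ)))) hsub
    exact this (Or.inl (left_mem_segment ℝ x c1))

noncomputable def esymDel (x : Fin n → ℝ) (i : Fin n) (m : ℕ) : ℝ :=
  ∑ T ∈ Finset.powersetCard m ((Finset.univ : Finset (Fin n)).erase i), ∏ l ∈ T, x l

theorem iter_deriv_linear_mul (a : ℝ) (q : ℝ[X]) :
    ∀ m : ℕ, 1 ≤ m → derivative^[m] ((X + C a) * q) =
      (X + C a) * derivative^[m] q + (m : ℝ[X]) * derivative^[m - 1] q := by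
  intro m
  induction m with
  | zero => omega
  | succ l ih =>
    intro _
    rcases Nat.eq_zero_or_pos l with rfl | hl
    · simp [Polynomial.derivative_mul]
      try ring
    · rw [Function.iterate_succ_apply', ih hl, Polynomial.derivative_add,
        Polynomial.derivative_mul, Polynomial.derivative_mul]
      rw [show derivative (X + C a) = 1 by simp, show derivative ((l : ℝ[X])) = 0 by simp]
      rw [← Function.iterate_succ_apply' derivative l q,
        ← Function.iterate_succ_apply' derivative (l - 1) q]
      simp only [Nat.succ_eq_add_one, Nat.add_sub_cancel]
      rw [show l - 1 + 1 = l by omega]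
      push_cast
      ring

/-- Key lemma: if `x ∈ Γ_j` then the `(j-1)`-th elementary symmetric polynomial of
`x` with the `i`-th entry deleted is positive. -/
theorem esymDel_pos {j : ℕ} (hj1 : 1 ≤ j) (hjn : j ≤ n) {x : Fin n → ℝ}
    (hx : x ∈ Gset n j) (i : Fin n) : 0 < esymDel x i (j - 1) := by
  have hn1 : 1 ≤ n := le_trans hj1 hjn
  have hcarde : ((Finset.univ : Finset (Fin n)).erase i).card = n - 1 := by
    rw [Finset.card_erase_of_mem (Finset.mem_univ i)]
    simp
  rcases Nat.eq_zero_or_pos (j - 1) with hj0 | hj1'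
  · rw [hj0, esymDel]
    simp
  -- now 2 ≤ j
  have hj2 : 2 ≤ j := by omega
  -- the deleted polynomial q and its derivatives
  set q : ℝ[X] := pF ((Finset.univ : Finset (Fin n)).erase i) x with hq
  have hqdeg : q.natDegree = n - 1 := by rw [hq, natDegree_pF, hcarde]
  have hqrr : Multiset.card q.roots = q.natDegree := rr_pF _ x
  have hqne : q ≠ 0 := pF_ne_zero _ x
  set m : ℕ := n - j with hm
  have hm1 : 1 ≤ m ∨ j = n := by omega
  -- first handle j = n separately
  rcases eq_or_ne j n with rfl | hjne
  · -- all coordinates positive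
    have hneg := roots_neg_of_esym_nonneg x hj1 hjn
      (fun a b c => (hx a b c).le) (hx _ hj1 le_rfl)
    rw [Nat.sub_self, Function.iterate_zero_apply, roots_pF] at hneg
    have hpos : ∀ l, 0 < x l := by
      intro l
      have hmem : -(x l) ∈ Finset.univ.val.map (fun l => -(x l)) :=
        Multiset.mem_map_of_mem _ (Finset.mem_univ l)
      have := hneg _ hmem
      linarith
    refine Finset.sum_pos (fun T hT => Finset.prod_pos fun l _ => hpos l) ?_
    refine Finset.powersetCard_nonempty.2 ?_
    exact le_trans (by omega) (le_of_eq hcarde.symm)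
  have hm1 : 1 ≤ m := by omega
  have hmn1 : m ≤ n - 1 := by omega
  -- B = q^{(m)}, f = q^{(m-1)}
  obtain ⟨hBne, hBdeg, hBcard⟩ := iterate_derivative_rr hqrr hqne m (by omega)
  obtain ⟨hfne, hfdeg, hfcard⟩ := iterate_derivative_rr hqrr hqne (m - 1) (by omega)
  have hBf0 : derivative^[m] q = derivative (derivative^[m - 1] q) := by
    conv_lhs => rw [show m = (m - 1) + 1 by omega]
    rw [Function.iterate_succ_apply']
  set B : ℝ[X] := derivative^[m] q with hB
  set f : ℝ[X] := derivative^[m - 1] q with hf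
  rw [hqdeg] at hBdeg hfdeg hBcard hfcard
  have hBdeg' : B.natDegree = j - 1 := by omega
  have hBcard' : Multiset.card B.roots = j - 1 := by omega
  have hfdeg' : f.natDegree = j := by omega
  have hfcard' : Multiset.card f.roots = j := by omega
  have hBf : B = derivative f := hBf0
  -- leading coefficients
  have hqlead : q.coeff (n - 1) = 1 := by
    have := (pF_monic ((Finset.univ : Finset (Fin n)).erase i) x).coeff_natDegree
    rwa [hqdeg] at this
  have hBlead : 0 < B.leadingCoeff := by
    rw [Polynomial.leadingCoeff, hBdeg', hB, Polynomial.coeff_iterate_derivative,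
      show j - 1 + m = n - 1 by omega, hqlead, nsmul_eq_mul, mul_one]
    exact_mod_cast descFactorial_pos (by omega)
  have hflead : 0 < f.leadingCoeff := by
    rw [Polynomial.leadingCoeff, hfdeg', hf, Polynomial.coeff_iterate_derivative,
      show j + (m - 1) = n - 1 by omega, hqlead, nsmul_eq_mul, mul_one]
    exact_mod_cast descFactorial_pos (by omega)
  -- main claim: all roots of B are negative
  have hmain : ∀ r ∈ B.roots, r < 0 := by
    have hBne0 : B.roots ≠ 0 := by
      intro h
      rw [h] at hBcard'
      simp at hBcard'
      omega
    obtain ⟨ρ, hρmem, hρmax⟩ : ∃ ρ ∈ B.roots, ∀ r ∈ B.roots, r ≤ ρ := by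
      have hne := Multiset.toFinset_nonempty.2 hBne0
      refine ⟨B.roots.toFinset.max' hne, Multiset.mem_toFinset.1 (Finset.max'_mem _ hne),
        fun r hr => Finset.le_max' _ r (Multiset.mem_toFinset.2 hr)⟩
    intro r hr
    rcases lt_or_ge ρ 0 with h | h
    · exact lt_of_le_of_lt (hρmax r hr) h
    exfalso
    -- ρ ≥ 0 is the maximal root of B; derive a contradiction
    obtain ⟨hPne, hPdeg, hPcard, hPlead⟩ := Pm_facts x hjn
    set P : ℝ[X] := derivative^[n - j] (pF Finset.univ x) with hP
    have hPneg := roots_neg_of_esym_nonneg x hj1 hjn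
      (fun a b c => (hx a b c).le) (hx _ hj1 le_rfl)
    have hPρ : 0 < P.eval ρ :=
      eval_pos_of_roots_neg (hPcard.trans hPdeg.symm) hPlead hPneg h
    -- P = (X + C (x i)) * B + m * f
    have hsplit : pF Finset.univ x = (X + C (x i)) * q := by
      rw [hq, pF, pF, ← Finset.mul_prod_erase Finset.univ _ (Finset.mem_univ i)]
    have hident : P = (X + C (x i)) * B + (m : ℝ[X]) * f := by
      rw [hP, hsplit, ← hm, iter_deriv_linear_mul (x i) q m hm1, ← hB, ← hf]
    have hevalB : B.eval ρ = 0 := (mem_roots hBne).1 hρmem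
    have hfρ : 0 < f.eval ρ := by
      have := hPρ
      rw [hident] at this
      simp only [eval_add, eval_mul, eval_natCast, hevalB, mul_zero, zero_add] at this
      have hmpos : (0:ℝ) < m := by exact_mod_cast hm1
      nlinarith
    -- f has a root greater than ρ
    have hfroot_gt : ∃ r ∈ f.roots, ρ < r := by
      by_contra hcon
      push_neg at hcon
      have hfne0 : f.roots ≠ 0 := by
        intro h; rw [h] at hfcard'; simp at hfcard'; omega
      obtain ⟨c0, hc0mem, hc0max⟩ : ∃ c0 ∈ f.roots, ∀ r ∈ f.roots, r ≤ c0 := by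
        have hne := Multiset.toFinset_nonempty.2 hfne0
        refine ⟨f.roots.toFinset.max' hne, Multiset.mem_toFinset.1 (Finset.max'_mem _ hne),
          fun r hr => Finset.le_max' _ r (Multiset.mem_toFinset.2 hr)⟩
      have hc0ρ : c0 < ρ := by
        rcases (hcon c0 hc0mem).lt_or_eq with hlt | heq
        · exact hlt
        · exfalso
          have := (mem_roots hfne).1 hc0mem
          rw [heq] at this
          rw [IsRoot] at this
          linarith [hfρ, this]
      have hmono := card_filter_gt_derivative_le (p := f) (by omega) (by omega) c0
      rw [← hBf] at hmono
      have hB1 : 0 < Multiset.card (B.roots.filter (fun r => c0 < r)) := by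
        rw [Multiset.card_pos_iff_exists_mem]
        exact ⟨ρ, Multiset.mem_filter.2 ⟨hρmem, hc0ρ⟩⟩
      have hf0 : Multiset.card (f.roots.filter (fun r => c0 < r)) = 0 := by
        rw [Multiset.card_eq_zero, Multiset.filter_eq_nil]
        intro r hr
        exact not_lt.2 (hc0max r hr)
      omega
    obtain ⟨r0, hr0mem, hr0gt⟩ := hfroot_gt
    have heven := even_card_roots_gt (hfcard'.trans hfdeg'.symm) hflead hfρ (c := ρ)
    have hge1 : 0 < Multiset.card (f.roots.filter (fun r => ρ < r)) := by
      rw [Multiset.card_pos_iff_exists_mem]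
      exact ⟨r0, Multiset.mem_filter.2 ⟨hr0mem, hr0gt⟩⟩
    have hge2 : 2 ≤ Multiset.card (f.roots.filter (fun r => ρ < r)) := by
      obtain ⟨c, hc⟩ := heven
      omega
    have hrolle := card_roots_filter_le f (fun r => ρ < r)
      (fun a b z ha hb haz hzb => lt_trans ha haz)
    rw [← hBf] at hrolle
    have hBgt : 0 < Multiset.card (B.roots.filter (fun r => ρ < r)) := by omega
    obtain ⟨rB, hrBmem⟩ := Multiset.card_pos_iff_exists_mem.1 hBgt
    have hrB := Multiset.mem_filter.1 hrBmem
    exact absurd (hρmax rB hrB.1) (not_le.2 hrB.2)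
  -- conclude
  have hevalB0 : 0 < B.eval 0 :=
    eval_pos_of_roots_neg (hBcard'.trans hBdeg'.symm) hBlead hmain le_rfl
  have hcoeff0 : B.coeff 0 = (m.factorial : ℝ) * esymDel x i (j - 1) := by
    rw [hB, Polynomial.coeff_iterate_derivative, zero_add, nsmul_eq_mul]
    have hc : q.coeff m = esymDel x i (j - 1) := by
      have := coeff_pF ((Finset.univ : Finset (Fin n)).erase i) x
        (j := j - 1) (by rw [hcarde]; omega)
      rw [hcarde, show n - 1 - (j - 1) = m by omega] at this
      rw [this, esymDel]
    rw [hc, Nat.descFactorial_self]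
  rw [← Polynomial.coeff_zero_eq_eval_zero, hcoeff0] at hevalB0
  have hfacpos : (0:ℝ) < (m.factorial : ℝ) := by exact_mod_cast m.factorial_pos
  nlinarith

-- ===== matrix part =====
open Matrix in
theorem diag_const_comm (N : Matrix (Fin n) (Fin n) ℝ[X]) :
    N * Matrix.diagonal (fun _ => (X : ℝ[X])) = Matrix.diagonal (fun _ => (X : ℝ[X])) * N := by
  ext a b
  rw [Matrix.mul_diagonal, Matrix.diagonal_mul, mul_comm]

open Matrix in
theorem charpoly_unitary_conj {U M : Matrix (Fin n) (Fin n) ℝ}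
    (hU1 : U * star U = 1) (hU2 : star U * U = 1) :
    (U * M * star U).charpoly = M.charpoly := by
  have hmap1 : (U.map (C : ℝ →+* ℝ[X])) * ((star U).map (C : ℝ →+* ℝ[X])) = 1 := by
    rw [← Matrix.map_mul, hU1]
    simp
  have hmap2 : ((star U).map (C : ℝ →+* ℝ[X])) * (U.map (C : ℝ →+* ℝ[X])) = 1 := by
    rw [← Matrix.map_mul, hU2]
    simp
  have hch : Matrix.charmatrix (U * M * star U) =
      (U.map (C : ℝ →+* ℝ[X])) * Matrix.charmatrix M * ((star U).map (C : ℝ →+* ℝ[X])) := by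
    rw [Matrix.charmatrix, Matrix.charmatrix, Matrix.mul_sub, Matrix.sub_mul]
    congr 1
    · rw [Matrix.scalar_apply, diag_const_comm (U.map (C : ℝ →+* ℝ[X])), Matrix.mul_assoc,
        hmap1, Matrix.mul_one]
    · simp only [RingHom.mapMatrix_apply, Matrix.map_mul]
  rw [Matrix.charpoly, Matrix.charpoly, hch, Matrix.det_mul, Matrix.det_mul]
  have : (U.map (C : ℝ →+* ℝ[X])).det * ((star U).map (C : ℝ →+* ℝ[X])).det = 1 := by
    rw [← Matrix.det_mul, hmap1, Matrix.det_one]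
  calc (U.map (C : ℝ →+* ℝ[X])).det * (Matrix.charmatrix M).det *
        ((star U).map (C : ℝ →+* ℝ[X])).det
      = (Matrix.charmatrix M).det *
        ((U.map (C : ℝ →+* ℝ[X])).det * ((star U).map (C : ℝ →+* ℝ[X])).det) := by ring
    _ = (Matrix.charmatrix M).det := by rw [this, mul_one]

open Matrix in
theorem charmatrix_diagonal (d : Fin n → ℝ) :
    Matrix.charmatrix (Matrix.diagonal d) = Matrix.diagonal (fun i => X - C (d i)) := by
  ext a b
  by_cases hab : a = b
  · subst hab
    rw [Matrix.charmatrix_apply_eq, Matrix.diagonal_apply_eq, Matrix.diagonal_apply_eq]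
  · rw [Matrix.charmatrix_apply_ne _ _ _ hab, Matrix.diagonal_apply_ne _ hab,
      Matrix.diagonal_apply_ne _ hab]
    simp

open Matrix in
theorem charpoly_diagonal (d : Fin n → ℝ) :
    (Matrix.diagonal d).charpoly = ∏ i, (X - C (d i)) := by
  rw [Matrix.charpoly, charmatrix_diagonal, Matrix.det_diagonal]

theorem prod_neg_fin (T : Finset (Fin n)) (g : Fin n → ℝ) :
    ∏ i ∈ T, (-(g i)) = (-1 : ℝ) ^ T.card * ∏ i ∈ T, g i := by
  rw [← Finset.prod_const, ← Finset.prod_mul_distrib]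
  exact Finset.prod_congr rfl fun i _ => by ring

theorem charpoly_diagonal_coeff (d : Fin n → ℝ) {j : ℕ} (hj : j ≤ n) :
    (Matrix.diagonal d).charpoly.coeff (n - j) = (-1 : ℝ) ^ j * esym n j d := by
  rw [charpoly_diagonal]
  have h1 : (∏ i, (X - C (d i))) = ∏ i : Fin n, (X + C (-(d i))) := by
    refine Finset.prod_congr rfl fun i _ => ?_
    rw [map_neg, sub_eq_add_neg]
  rw [h1, Finset.prod_X_add_C_coeff Finset.univ (fun i => -(d i))
    (by simpa using Nat.sub_le n j)]
  have hcard : (Finset.univ : Finset (Fin n)).card = n := by simp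
  rw [show #(Finset.univ : Finset (Fin n)) - (n - j) = j by rw [hcard]; omega]
  rw [esym, Finset.mul_sum]
  refine Finset.sum_congr rfl fun T hT => ?_
  rw [prod_neg_fin, (Finset.mem_powersetCard.1 hT).2]

-- ===== the ℝ[X]-matrix derivative computation =====

/-- the matrix `D + X·E` over `ℝ[X]` -/
noncomputable def NX (d : Fin n → ℝ) (E : Matrix (Fin n) (Fin n) ℝ) :
    Matrix (Fin n) (Fin n) ℝ[X] :=
  (Matrix.diagonal d).map (C : ℝ →+* ℝ[X]) + (X : ℝ[X]) • E.map (C : ℝ →+* ℝ[X])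

theorem NX_map_eval (d : Fin n → ℝ) (E : Matrix (Fin n) (Fin n) ℝ) (s : ℝ) :
    (NX d E).map (evalRingHom s) = Matrix.diagonal d + s • E := by
  ext a b
  simp only [NX, Matrix.map_apply, Matrix.add_apply, Matrix.smul_apply, smul_eq_mul,
    coe_evalRingHom, eval_add, eval_mul, eval_X, eval_C]

theorem NX_apply_ne (d : Fin n → ℝ) (E : Matrix (Fin n) (Fin n) ℝ) {a b : Fin n}
    (hab : a ≠ b) : NX d E a b = X * C (E a b) := by
  simp only [NX, Matrix.add_apply, Matrix.map_apply, Matrix.smul_apply, smul_eq_mul,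
    Matrix.diagonal_apply_ne _ hab, Polynomial.C_0, map_zero, zero_add]

theorem NX_apply_eq (d : Fin n → ℝ) (E : Matrix (Fin n) (Fin n) ℝ) (a : Fin n) :
    NX d E a a = C (d a) + X * C (E a a) := by
  simp only [NX, Matrix.add_apply, Matrix.map_apply, Matrix.smul_apply, smul_eq_mul,
    Matrix.diagonal_apply_eq]

theorem coeff_coeff_zero_of_dvd {P : (ℝ[X])[X]} (h : (C (X ^ 2 : ℝ[X])) ∣ P) (m : ℕ) :
    ((P.coeff m).coeff 1) = 0 := by
  obtain ⟨w, rfl⟩ := h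
  rw [Polynomial.coeff_C_mul, mul_comm, Polynomial.coeff_mul_X_pow']
  norm_num

theorem prod_coeff_zero (T : Finset (Fin n)) (d Ed : Fin n → ℝ) :
    (∏ i ∈ T, (C (d i) + X * C (Ed i))).coeff 0 = ∏ i ∈ T, d i := by
  have h := map_prod (Polynomial.constantCoeff (R := ℝ)) (fun i => C (d i) + X * C (Ed i)) T
  simp only [Polynomial.constantCoeff_apply] at h
  rw [h]
  refine Finset.prod_congr rfl fun i _ => ?_
  rw [Polynomial.coeff_add, Polynomial.coeff_C_zero, Polynomial.mul_coeff_zero,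
    Polynomial.coeff_X_zero, zero_mul, add_zero]

theorem prod_coeff_one (T : Finset (Fin n)) (d Ed : Fin n → ℝ) :
    (∏ i ∈ T, (C (d i) + X * C (Ed i))).coeff 1 =
      ∑ i ∈ T, Ed i * ∏ l ∈ T.erase i, d l := by
  induction T using Finset.induction_on with
  | empty => simp [Polynomial.coeff_one]
  | @insert a T ha ih =>
    have hQ0 := prod_coeff_zero T d Ed
    have hX : (X * (C (Ed a) * ∏ i ∈ T, (C (d i) + X * C (Ed i)))).coeff 1
        = Ed a * ∏ i ∈ T, d i := by
      have h := Polynomial.coeff_X_mul (C (Ed a) * ∏ i ∈ T, (C (d i) + X * C (Ed i))) 0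
      rw [Polynomial.coeff_C_mul, hQ0] at h
      exact h
    rw [Finset.prod_insert ha, add_mul, mul_assoc, Polynomial.coeff_add,
      Polynomial.coeff_C_mul, ih, hX]
    rw [Finset.sum_insert ha, Finset.erase_insert ha]
    have hsum : ∑ i ∈ T, Ed i * ∏ l ∈ (insert a T).erase i, d l
        = ∑ i ∈ T, (d a * (Ed i * ∏ l ∈ T.erase i, d l)) := by
      refine Finset.sum_congr rfl fun i hi => ?_
      have hia : a ≠ i := fun h => ha (h ▸ hi)
      rw [Finset.erase_insert_of_ne hia, Finset.prod_insert
        (fun h => ha (Finset.mem_of_mem_erase h))]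
      ring
    rw [hsum, ← Finset.mul_sum]
    ring

theorem sum_powersetCard_swap (d Ed : Fin n → ℝ) {j : ℕ} (hj1 : 1 ≤ j) :
    ∑ T ∈ Finset.powersetCard j (Finset.univ : Finset (Fin n)),
        ∑ i ∈ T, Ed i * ∏ l ∈ T.erase i, d l
      = ∑ i, Ed i * esymDel d i (j - 1) := by
  have hR : ∀ i : Fin n, Ed i * esymDel d i (j - 1) =
      ∑ T' ∈ Finset.powersetCard (j - 1) ((Finset.univ : Finset (Fin n)).erase i),
        Ed i * ∏ l ∈ T', d l := by
    intro i
    rw [esymDel, Finset.mul_sum]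
  rw [Finset.sum_congr rfl fun i _ => hR i]
  rw [Finset.sum_sigma', Finset.sum_sigma']
  refine Finset.sum_nbij' (fun p => ⟨p.2, p.1.erase p.2⟩) (fun p => ⟨insert p.1 p.2, p.1⟩)
    ?_ ?_ ?_ ?_ ?_
  · rintro ⟨T, i⟩ hp
    rw [Finset.mem_sigma] at hp ⊢
    obtain ⟨hT, hi⟩ := hp
    rw [Finset.mem_powersetCard] at hT
    refine ⟨Finset.mem_univ _, Finset.mem_powersetCard.2 ⟨?_, ?_⟩⟩
    · exact Finset.erase_subset_erase _ hT.1
    · rw [Finset.card_erase_of_mem hi, hT.2]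
  · rintro ⟨i, T'⟩ hp
    rw [Finset.mem_sigma] at hp ⊢
    obtain ⟨-, hT'⟩ := hp
    rw [Finset.mem_powersetCard] at hT'
    have hiT' : i ∉ T' := fun h => (Finset.notMem_erase i _) (hT'.1 h)
    refine ⟨Finset.mem_powersetCard.2 ⟨?_, ?_⟩, Finset.mem_insert_self i T'⟩
    · intro x hx
      exact Finset.mem_univ x
    · rw [Finset.card_insert_of_notMem hiT', hT'.2]
      omega
  · rintro ⟨T, i⟩ hp
    rw [Finset.mem_sigma] at hp
    simp only
    congr 1
    exact Finset.insert_erase hp.2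
  · rintro ⟨i, T'⟩ hp
    rw [Finset.mem_sigma] at hp
    obtain ⟨-, hT'⟩ := hp
    rw [Finset.mem_powersetCard] at hT'
    have hiT' : i ∉ T' := fun h => (Finset.notMem_erase i _) (hT'.1 h)
    simp only
    congr 1
    exact Finset.erase_insert hiT'
  · rintro ⟨T, i⟩ hp
    rfl

theorem sigma_eq_insert {p : (Σ _ : Finset (Fin n), Fin n)} : True := trivial

/-- the crucial first-order coefficient computation -/
theorem coeff_one_charpoly_NX (d : Fin n → ℝ) (E : Matrix (Fin n) (Fin n) ℝ)
    {j : ℕ} (hj1 : 1 ≤ j) (hjn : j ≤ n) :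
    (((NX d E).charpoly).coeff (n - j)).coeff 1 =
      (-1 : ℝ) ^ j * ∑ i, E i i * esymDel d i (j - 1) := by
  rw [Matrix.charpoly, Matrix.det_apply', Polynomial.finset_sum_coeff,
    Polynomial.finset_sum_coeff]
  rw [Finset.sum_eq_single_of_mem (1 : Equiv.Perm (Fin n)) (Finset.mem_univ 1)
    ?side ]
  case side =>
    -- vanishing of non-identity permutations
    intro σ _ hσ
    have hex : ∃ a : Fin n, σ a ≠ a := by
      by_contra hcon
      push_neg at hcon
      exact hσ (Equiv.ext fun a => hcon a)
    obtain ⟨a, ha⟩ := hex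
    have hb : σ (σ a) ≠ σ a := fun h => ha (σ.injective h)
    have hab : σ a ≠ a := ha
    refine coeff_coeff_zero_of_dvd ?_ _
    have hdvd : ∀ c : Fin n, σ c ≠ c →
        (C (X : ℝ[X])) ∣ Matrix.charmatrix (NX d E) (σ c) c := by
      intro c hc
      rw [Matrix.charmatrix_apply_ne _ _ _ hc, NX_apply_ne d E hc, _root_.map_mul]
      exact Dvd.dvd.neg_right (Dvd.intro _ rfl)
    have h1 : (C (X : ℝ[X])) ∣ Matrix.charmatrix (NX d E) (σ (σ a)) (σ a) := hdvd _ hb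
    have h2 : (C (X : ℝ[X])) ∣ Matrix.charmatrix (NX d E) (σ a) a := hdvd _ hab
    have hprod : (C (X ^ 2 : ℝ[X])) ∣ ∏ i, Matrix.charmatrix (NX d E) (σ i) i := by
      have hmem : σ a ∈ Finset.univ.erase a := Finset.mem_erase.2 ⟨ha, Finset.mem_univ _⟩
      rw [show (C (X ^ 2 : ℝ[X])) = C (X : ℝ[X]) * C (X : ℝ[X]) by rw [sq, _root_.map_mul]]
      rw [← Finset.mul_prod_erase Finset.univ _ (Finset.mem_univ a),
        ← Finset.mul_prod_erase _ _ hmem]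
      exact mul_dvd_mul h2 (h1.mul_right _)
    exact hprod.mul_left _
  -- identity permutation
  have hsign : ((Equiv.Perm.sign (1 : Equiv.Perm (Fin n)) : ℤ) : (ℝ[X])[X]) = 1 := by
    simp
  rw [hsign, one_mul]
  simp only [Equiv.Perm.one_apply]
  have hdiag : ∀ i : Fin n, Matrix.charmatrix (NX d E) i i = X + C (-(NX d E i i)) := by
    intro i
    rw [Matrix.charmatrix_apply_eq, map_neg, sub_eq_add_neg]
  rw [Finset.prod_congr rfl fun i _ => hdiag i]
  rw [Finset.prod_X_add_C_coeff Finset.univ (fun i => -(NX d E i i))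
    (by simpa using Nat.sub_le n j)]
  have hcard : (Finset.univ : Finset (Fin n)).card = n := by simp
  rw [show #(Finset.univ : Finset (Fin n)) - (n - j) = j by rw [hcard]; omega]
  rw [Polynomial.finset_sum_coeff]
  have hterm : ∀ T ∈ Finset.powersetCard j (Finset.univ : Finset (Fin n)),
      (∏ i ∈ T, -(NX d E i i)).coeff 1 =
        (-1:ℝ)^j * ∑ i ∈ T, E i i * ∏ l ∈ T.erase i, d l := by
    intro T hT
    have hneg : ∏ i ∈ T, -(NX d E i i) = (-1 : ℝ[X])^T.card * ∏ i ∈ T, NX d E i i := by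
      rw [← Finset.prod_const, ← Finset.prod_mul_distrib]
      exact Finset.prod_congr rfl fun i _ => by ring
    have hc1 : ((-1 : ℝ[X]))^T.card = C ((-1:ℝ)^T.card) := by
      rw [map_pow, _root_.map_neg, _root_.map_one]
    rw [hneg, hc1, Polynomial.coeff_C_mul, (Finset.mem_powersetCard.1 hT).2]
    congr 1
    rw [Finset.prod_congr rfl fun i (_ : i ∈ T) => NX_apply_eq d E i]
    exact prod_coeff_one T d (fun i => E i i)
  rw [Finset.sum_congr rfl hterm, ← Finset.mul_sum]
  rw [sum_powersetCard_swap d (fun i => E i i) hj1]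

theorem msigma_herm {M : Matrix (Fin n) (Fin n) ℝ} (h : M.IsHermitian) (j : ℕ) :
    msigma j M = esym n j h.eigenvalues := by
  rw [msigma, dif_pos h]

theorem msigma_eq_coeff {M : Matrix (Fin n) (Fin n) ℝ} (h : M.IsHermitian)
    {j : ℕ} (hj : j ≤ n) :
    msigma j M = (-1:ℝ)^j * M.charpoly.coeff (n - j) := by
  have hU1 : (h.eigenvectorUnitary : Matrix (Fin n) (Fin n) ℝ) *
      star (h.eigenvectorUnitary : Matrix (Fin n) (Fin n) ℝ) = 1 :=
    Matrix.mem_unitaryGroup_iff.mp h.eigenvectorUnitary.2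
  have hU2 : star (h.eigenvectorUnitary : Matrix (Fin n) (Fin n) ℝ) *
      (h.eigenvectorUnitary : Matrix (Fin n) (Fin n) ℝ) = 1 :=
    Matrix.mem_unitaryGroup_iff'.mp h.eigenvectorUnitary.2
  have hspec := h.spectral_theorem
  have hdiag : Matrix.diagonal (RCLike.ofReal ∘ h.eigenvalues) =
      Matrix.diagonal h.eigenvalues := by
    congr 1
  rw [hdiag] at hspec
  have hcp : M.charpoly = (Matrix.diagonal h.eigenvalues).charpoly := by
    conv_lhs => rw [hspec]
    exact charpoly_unitary_conj hU1 hU2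
  rw [msigma_herm h j, hcp, charpoly_diagonal_coeff h.eigenvalues hj,
    ← mul_assoc, ← mul_pow]
  norm_num

theorem herm_comb {A B : Matrix (Fin n) (Fin n) ℝ} (hAH : A.IsHermitian)
    (hBH : B.IsHermitian) (t : ℝ) : (t • A + B).IsHermitian := by
  have : (t • A + B)ᴴ = t • A + B := by
    rw [Matrix.conjTranspose_add, Matrix.conjTranspose_smul, star_trivial,
      hAH.eq, hBH.eq]
  exact this

theorem deriv_rep {A B : Matrix (Fin n) (Fin n) ℝ} (hA : A.PosSemidef)
    (hBH : B.IsHermitian) (t₀ : ℝ) :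
    ∃ (lam Ed : Fin n → ℝ),
      (∀ i, 0 ≤ Ed i) ∧
      (∀ l, esym n l lam = msigma l (t₀ • A + B)) ∧
      (∀ j, 1 ≤ j → j ≤ n →
        HasDerivAt (fun t => msigma j (t • A + B))
          (∑ i, Ed i * esymDel lam i (j - 1)) t₀) := by
  have hAH : A.IsHermitian := hA.1
  have hM : (t₀ • A + B).IsHermitian := herm_comb hAH hBH t₀
  set M := t₀ • A + B with hMdef
  set U : Matrix (Fin n) (Fin n) ℝ := (hM.eigenvectorUnitary : Matrix (Fin n) (Fin n) ℝ)
    with hUdef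
  have hU1 : U * star U = 1 := Matrix.mem_unitaryGroup_iff.mp hM.eigenvectorUnitary.2
  have hU2 : star U * U = 1 := Matrix.mem_unitaryGroup_iff'.mp hM.eigenvectorUnitary.2
  set lam : Fin n → ℝ := hM.eigenvalues with hlam
  set Atil : Matrix (Fin n) (Fin n) ℝ := star U * A * U with hAtil
  have hspec : M = U * Matrix.diagonal lam * star U := by
    have h := hM.spectral_theorem
    have hdiag : Matrix.diagonal (RCLike.ofReal ∘ hM.eigenvalues) =
        Matrix.diagonal hM.eigenvalues := by congr 1
    rw [hdiag] at h
    exact h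
  refine ⟨lam, fun i => Atil i i, ?_, ?_, ?_⟩
  · intro i
    have hpsd : (Uᴴ * A * U).PosSemidef := hA.conjTranspose_mul_mul_same U
    rw [← Matrix.star_eq_conjTranspose] at hpsd
    rw [hAtil]
    simpa using hpsd.dotProduct_mulVec_nonneg (Pi.single i 1)
  · intro l
    rw [msigma_herm hM l]
  · intro j hj1 hjn
    have hconjA : U * Atil * star U = A := by
      rw [hAtil]
      calc U * (star U * A * U) * star U = (U * star U) * A * (U * star U) := by
            noncomm_ring
        _ = A := by rw [hU1, Matrix.one_mul, Matrix.mul_one]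
    have hconj : ∀ s : ℝ, (t₀ + s) • A + B = U * (Matrix.diagonal lam + s • Atil) * star U := by
      intro s
      rw [Matrix.mul_add, Matrix.add_mul, ← hspec]
      rw [Matrix.mul_smul, Matrix.smul_mul, hconjA]
      rw [add_smul, hMdef]
      abel
    set q0 : ℝ[X] := ((NX lam Atil).charpoly).coeff (n - j) with hq0
    have hrep : ∀ t : ℝ, msigma j (t • A + B) = (-1:ℝ)^j * Polynomial.eval (t - t₀) q0 := by
      intro t
      have hs : t = t₀ + (t - t₀) := by ring
      have hHerm : ((t₀ + (t - t₀)) • A + B).IsHermitian := herm_comb hAH hBH _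
      calc msigma j (t • A + B) = msigma j ((t₀ + (t - t₀)) • A + B) := by rw [← hs]
        _ = (-1:ℝ)^j * ((t₀ + (t - t₀)) • A + B).charpoly.coeff (n - j) :=
            msigma_eq_coeff hHerm hjn
        _ = (-1:ℝ)^j * (Matrix.diagonal lam + (t - t₀) • Atil).charpoly.coeff (n - j) := by
            rw [hconj (t - t₀), charpoly_unitary_conj hU1 hU2]
        _ = (-1:ℝ)^j * Polynomial.eval (t - t₀) q0 := by
            rw [← NX_map_eval lam Atil (t - t₀), Matrix.charpoly_map,
              Polynomial.coeff_map, coe_evalRingHom]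
    set q1 : ℝ[X] := q0.comp (Polynomial.X - Polynomial.C t₀) with hq1
    have hrep1 : ∀ t : ℝ, msigma j (t • A + B) = (-1:ℝ)^j * Polynomial.eval t q1 := by
      intro t
      rw [hq1, Polynomial.eval_comp]
      simp only [Polynomial.eval_sub, Polynomial.eval_X, Polynomial.eval_C]
      exact hrep t
    have hq1' : Polynomial.eval t₀ (Polynomial.derivative q1) =
        Polynomial.eval 0 (Polynomial.derivative q0) := by
      rw [hq1, Polynomial.derivative_comp]
      simp [Polynomial.eval_comp]
    have hd2 : HasDerivAt (fun t => msigma j (t • A + B))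
        ((-1:ℝ)^j * Polynomial.eval 0 (Polynomial.derivative q0)) t₀ := by
      refine HasDerivAt.congr_of_eventuallyEq ?_
        (Filter.Eventually.of_forall fun t => hrep1 t)
      rw [← hq1']
      exact (Polynomial.hasDerivAt q1 t₀).const_mul ((-1:ℝ)^j)
    have hval : (-1:ℝ)^j * Polynomial.eval 0 (Polynomial.derivative q0) =
        ∑ i, Atil i i * esymDel lam i (j - 1) := by
      rw [← Polynomial.coeff_zero_eq_eval_zero, Polynomial.coeff_derivative]
      rw [hq0, coeff_one_charpoly_NX lam Atil hj1 hjn]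
      rw [show ((0:ℕ):ℝ) + 1 = 1 by norm_num, mul_one, ← mul_assoc, ← mul_pow]
      norm_num
    rw [hval] at hd2
    exact hd2

end SG

/-- If `A` is positive semi-definite, `B ∈ Γ_k^+` and `A + B ∈ Γ_k^+`, then
`σ_k(A + B) ≥ σ_k(B)`. -/
theorem sigma_add_ge {n k : ℕ} (h1 : 1 ≤ k) (hk : k ≤ n)
    (A B : Matrix (Fin n) (Fin n) ℝ) (hA : A.PosSemidef)
    (hB : inGamma n k B) (hAB : inGamma n k (A + B)) :
    msigma k B ≤ msigma k (A + B) := by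
  obtain ⟨hBH, hBgamma⟩ := hB
  have hGsetB : hBH.eigenvalues ∈ SG.Gset n k := by
    have hg : hBH.eigenvalues ∈
        connectedComponentIn {x : Fin n → ℝ | 0 < esym n k x} (fun _ => 1) := hBgamma
    rwa [SG.gamma_eq h1 hk] at hg
  set f : ℕ → ℝ → ℝ := fun j t => msigma j (t • A + B) with hf
  have hkey := fun t₀ : ℝ => SG.deriv_rep hA hBH t₀
  have hdiff : ∀ j, 1 ≤ j → j ≤ n → ∀ t : ℝ, DifferentiableAt ℝ (f j) t := by
    intro j hj1 hjn t
    obtain ⟨lam, Ed, -, -, hder⟩ := hkey t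
    exact (hder j hj1 hjn).differentiableAt
  have hcont : ∀ j, 1 ≤ j → j ≤ n → Continuous (f j) := by
    intro j hj1 hjn
    exact continuous_iff_continuousAt.2 fun t => (hdiff j hj1 hjn t).continuousAt
  have hstart : ∀ j, 1 ≤ j → j ≤ k → 0 < f j 0 := by
    intro j hj1 hjk
    have h0 : f j 0 = esym n j hBH.eigenvalues := by
      show msigma j ((0:ℝ) • A + B) = _
      rw [zero_smul, zero_add, msigma, dif_pos hBH]
    rw [h0]
    exact hGsetB j hj1 hjk
  have hD : ∀ t : ℝ, (∀ j, 1 ≤ j → j ≤ k → 0 < f j t) →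
      ∀ j, 1 ≤ j → j ≤ k → 0 ≤ deriv (f j) t := by
    intro t hgood j hj1 hjk
    obtain ⟨lam, Ed, hEd, hlink, hder⟩ := hkey t
    have hlam : lam ∈ SG.Gset n j := by
      intro l hl1 hlj
      rw [hlink l]
      exact hgood l hl1 (le_trans hlj hjk)
    show 0 ≤ deriv (fun t => msigma j (t • A + B)) t
    rw [(hder j hj1 (le_trans hjk hk)).deriv]
    exact Finset.sum_nonneg fun i _ =>
      mul_nonneg (hEd i) (SG.esymDel_pos hj1 (le_trans hjk hk) hlam i).le
  have hmono : ∀ j, 1 ≤ j → j ≤ k → ∀ T : ℝ, 0 ≤ T → T ≤ 1 →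
      (∀ t, 0 ≤ t → t < T → ∀ j', 1 ≤ j' → j' ≤ k → 0 < f j' t) → f j 0 ≤ f j T := by
    intro j hj1 hjk T hT0 hT1 hgood
    have hjn : j ≤ n := le_trans hjk hk
    have hmo : MonotoneOn (f j) (Set.Icc 0 T) := by
      refine monotoneOn_of_deriv_nonneg (convex_Icc 0 T)
        ((hcont j hj1 hjn).continuousOn) ?_ ?_
      · exact fun t _ => ((hdiff j hj1 hjn t).differentiableWithinAt)
      · intro t ht
        rw [interior_Icc] at ht
        exact hD t (fun j' a b => hgood t ht.1.le ht.2 j' a b) j hj1 hjk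
    exact hmo (Set.left_mem_Icc.2 hT0) (Set.mem_Icc.2 ⟨hT0, le_rfl⟩) hT0
  have hgoodIcc : ∀ t, 0 ≤ t → t ≤ 1 → ∀ j, 1 ≤ j → j ≤ k → 0 < f j t := by
    by_contra hcon
    push_neg at hcon
    obtain ⟨t1, ht10, ht11, j1, hj11, hj1k, hbad⟩ := hcon
    set Sbad : Set ℝ :=
      {t | (0 ≤ t ∧ t ≤ 1) ∧ ¬ (∀ j, 1 ≤ j → j ≤ k → 0 < f j t)} with hSbad
    have hSne : Sbad.Nonempty :=
      ⟨t1, ⟨ht10, ht11⟩, fun hgood => absurd (hgood j1 hj11 hj1k) (not_lt.2 hbad)⟩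
    have hgopen : IsOpen {t : ℝ | ∀ j, 1 ≤ j → j ≤ k → 0 < f j t} := by
      have hiff : {t : ℝ | ∀ j, 1 ≤ j → j ≤ k → 0 < f j t} =
          ⋂ j ∈ Finset.Icc 1 k, {t : ℝ | 0 < f j t} := by
        ext t
        simp only [Set.mem_setOf_eq, Set.mem_iInter, Finset.mem_Icc]
        exact ⟨fun h j hj => h j hj.1 hj.2, fun h j a b => h j ⟨a, b⟩⟩
      rw [hiff]
      refine isOpen_biInter_finset fun j hj => ?_
      rw [Finset.mem_Icc] at hj
      exact isOpen_lt continuous_const (hcont j hj.1 (le_trans hj.2 hk))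
    have hSclosed : IsClosed Sbad := by
      have heq : Sbad = (Set.Icc (0:ℝ) 1) ∩
          {t : ℝ | ∀ j, 1 ≤ j → j ≤ k → 0 < f j t}ᶜ := by
        ext t
        simp only [hSbad, Set.mem_setOf_eq, Set.mem_inter_iff, Set.mem_Icc,
          Set.mem_compl_iff]
      rw [heq]
      exact isClosed_Icc.inter hgopen.isClosed_compl
    have hbdd : BddBelow Sbad := ⟨0, fun t ht => ht.1.1⟩
    have hTmem : sInf Sbad ∈ Sbad := hSclosed.csInf_mem hSne hbdd
    have hT0 : 0 ≤ sInf Sbad := hTmem.1.1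
    have hT1 : sInf Sbad ≤ 1 := hTmem.1.2
    have hbelow : ∀ t, 0 ≤ t → t < sInf Sbad → ∀ j', 1 ≤ j' → j' ≤ k → 0 < f j' t := by
      intro t ht0 htT
      by_contra hbad'
      push_neg at hbad'
      obtain ⟨j', a, b, c⟩ := hbad'
      have htmem : t ∈ Sbad := ⟨⟨ht0, le_trans htT.le hT1⟩,
        fun hg => absurd (hg j' a b) (not_lt.2 c)⟩
      have := csInf_le hbdd htmem
      linarith
    exact hTmem.2 (fun j hj1 hjk => lt_of_lt_of_le (hstart j hj1 hjk)
      (hmono j hj1 hjk (sInf Sbad) hT0 hT1 hbelow))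
  have hfinal := hmono k h1 le_rfl 1 zero_le_one le_rfl
    (fun t ht0 ht1 j a b => hgoodIcc t ht0 ht1.le j a b)
  have hf0 : f k 0 = msigma k B := by
    show msigma k ((0:ℝ) • A + B) = _
    rw [zero_smul, zero_add]
  have hf1 : f k 1 = msigma k (A + B) := by
    show msigma k ((1:ℝ) • A + B) = _
    rw [one_smul]
  rw [hf0, hf1] at hfinal
  exact hfinal
end

section
/- Let k ≥ 2 and suppose A is a symmetric n×n matrix with eigenvalues in Γ_k^+ and all eigenvalues bounded: |λ_i(A)| ≤ C. If T_{k−1}(A) is positive definite, then its diagonal entries (in an eigenbasis of A) satisfy T_{k−1}(A)^{ii} ≥ 1/C' > 0 for some constant C' depending only on C, n, k, and a positive lower bound for σ_k(A). -/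
open Matrix Finset

namespace NDLB

open Polynomial

/-! ### Multiset elementary symmetric function basics -/

lemma esymm_zero' (s : Multiset ℝ) : s.esymm 0 = 1 := by
  simp [Multiset.esymm]

lemma esymm_one' (s : Multiset ℝ) : s.esymm 1 = s.sum := by
  simp [Multiset.esymm, Multiset.powersetCard_one, Multiset.map_map, Function.comp_def]

lemma esymm_cons (a : ℝ) (s : Multiset ℝ) (r : ℕ) :
    (a ::ₘ s).esymm (r + 1) = s.esymm (r + 1) + a * s.esymm r := by
  simp only [Multiset.esymm, Multiset.powersetCard_cons, Multiset.map_add, Multiset.sum_add,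
    Multiset.map_map]
  congr 1
  have : ((Multiset.powersetCard r s).map (Multiset.prod ∘ Multiset.cons a)).sum
      = ((Multiset.powersetCard r s).map (fun t => a * t.prod)).sum := by
    congr 1
    exact Multiset.map_congr rfl (fun t _ => by simp [Multiset.prod_cons])
  rw [this, Multiset.sum_map_mul_left]

lemma esymm_of_card_lt {s : Multiset ℝ} {j : ℕ} (h : Multiset.card s < j) :
    s.esymm j = 0 := by
  simp [Multiset.esymm, Multiset.powersetCard_eq_empty j h]

lemma esymm_card (s : Multiset ℝ) : s.esymm (Multiset.card s) = s.prod := by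
  induction s using Multiset.induction_on with
  | empty => simp [esymm_zero']
  | cons a s ih =>
    rw [Multiset.card_cons, esymm_cons, ih, esymm_of_card_lt (by omega), Multiset.prod_cons,
      zero_add]

/-- complement identity for `r = 1`. -/
lemma esymm_pred (s : Multiset ℝ) (h0 : (0 : ℝ) ∉ s) :
    ∀ m : ℕ, Multiset.card s = m + 1 →
      s.esymm m = s.prod * (s.map (·⁻¹)).sum := by
  induction s using Multiset.induction_on with
  | empty => intro m h; simp at h
  | cons a s ih =>
    intro m h
    have ha : a ≠ 0 := fun h' => h0 (h' ▸ Multiset.mem_cons_self a s)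
    have h0s : (0 : ℝ) ∉ s := fun h' => h0 (Multiset.mem_cons_of_mem h')
    rw [Multiset.card_cons] at h
    rcases Nat.eq_zero_or_pos m with hm | hm
    · subst hm
      have hs0 : s = 0 := Multiset.card_eq_zero.mp (by omega)
      subst hs0
      simp [esymm_zero', mul_inv_cancel₀ ha]
    · obtain ⟨m', rfl⟩ : ∃ m', m = m' + 1 := ⟨m - 1, by omega⟩
      have hcs : Multiset.card s = m' + 1 := by omega
      rw [esymm_cons, ih h0s m' hcs, Multiset.map_cons, Multiset.prod_cons, Multiset.sum_cons]
      have : s.esymm (m' + 1) = s.prod := by rw [← hcs, esymm_card]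
      rw [this]
      field_simp

/-- complement identity for `r = 2`. -/
lemma esymm_pred2 (s : Multiset ℝ) (h0 : (0 : ℝ) ∉ s) :
    ∀ m : ℕ, Multiset.card s = m + 2 →
      s.esymm m = s.prod * (s.map (·⁻¹)).esymm 2 := by
  induction s using Multiset.induction_on with
  | empty => intro m h; simp at h
  | cons a s ih =>
    intro m h
    have ha : a ≠ 0 := fun h' => h0 (h' ▸ Multiset.mem_cons_self a s)
    have h0s : (0 : ℝ) ∉ s := fun h' => h0 (Multiset.mem_cons_of_mem h')
    rw [Multiset.card_cons] at h
    rcases Nat.eq_zero_or_pos m with hm | hm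
    · subst hm
      obtain ⟨b, hb⟩ : ∃ b, s = {b} := Multiset.card_eq_one.mp (by omega)
      subst hb
      have hbne : b ≠ 0 := fun h' => h0s (h' ▸ Multiset.mem_singleton_self b)
      rw [esymm_zero']
      rw [Multiset.map_cons, Multiset.map_singleton, Multiset.prod_cons,
        Multiset.prod_singleton]
      have : (a⁻¹ ::ₘ {b⁻¹}).esymm 2 = a⁻¹ * b⁻¹ := by
        rw [show (2 : ℕ) = 1 + 1 from rfl, esymm_cons, esymm_one',
          esymm_of_card_lt (by simp), Multiset.sum_singleton, zero_add]
      rw [this]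
      field_simp
    · obtain ⟨m', rfl⟩ : ∃ m', m = m' + 1 := ⟨m - 1, by omega⟩
      have hcs : Multiset.card s = m' + 2 := by omega
      rw [esymm_cons, ih h0s m' hcs, esymm_pred s h0s (m' + 1) (by omega)]
      rw [Multiset.map_cons, Multiset.prod_cons]
      rw [show (2 : ℕ) = 1 + 1 from rfl, esymm_cons, esymm_one']
      field_simp
      ring

lemma sum_sq_identity (t : Multiset ℝ) :
    t.sum ^ 2 = (t.map (fun z => z ^ 2)).sum + 2 * t.esymm 2 := by
  induction t using Multiset.induction_on with
  | empty => simp [esymm_of_card_lt]; exact esymm_of_card_lt (by simp)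
  | cons a t ih =>
    rw [Multiset.sum_cons, Multiset.map_cons, Multiset.sum_cons]
    have hc : (a ::ₘ t).esymm 2 = t.esymm 2 + a * t.esymm 1 := esymm_cons a t 1
    rw [hc, esymm_one']
    nlinarith [ih]

/-- A real multiset cannot have `e_{top} > 0`, `e_{top-1} = 0`, `e_{top-2} ≥ 0`. -/
lemma core (T : Multiset ℝ) (h2 : 2 ≤ Multiset.card T)
    (hp : 0 < T.esymm (Multiset.card T))
    (h1 : T.esymm (Multiset.card T - 1) = 0)
    (h0 : 0 ≤ T.esymm (Multiset.card T - 2)) : False := by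
  rw [esymm_card] at hp
  have hprod : T.prod ≠ 0 := ne_of_gt hp
  have h0T : (0 : ℝ) ∉ T := fun h => hprod (Multiset.prod_eq_zero h)
  have e1 := esymm_pred T h0T (Multiset.card T - 1) (by omega)
  have e2 := esymm_pred2 T h0T (Multiset.card T - 2) (by omega)
  rw [h1] at e1
  have hsum : (T.map (·⁻¹)).sum = 0 := by
    rcases mul_eq_zero.mp e1.symm with h | h
    · exact absurd h hprod
    · exact h
  have he2 : 0 ≤ (T.map (·⁻¹)).esymm 2 := by
    rw [e2] at h0
    by_contra hneg
    push_neg at hneg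
    nlinarith
  have hsq := sum_sq_identity (T.map (·⁻¹))
  rw [hsum] at hsq
  -- sum of squares ≤ 0
  have hsqsum : ((T.map (·⁻¹)).map (fun z => z ^ 2)).sum ≤ 0 := by nlinarith
  -- but sum of squares > 0
  obtain ⟨a, ha⟩ := Multiset.exists_mem_of_ne_zero
    (show T ≠ 0 from fun h => by simp [h] at h2)
  have hane : a ≠ 0 := fun h => h0T (h ▸ ha)
  have hmem : a⁻¹ ^ 2 ∈ (T.map (·⁻¹)).map (fun z => z ^ 2) :=
    Multiset.mem_map_of_mem _ (Multiset.mem_map_of_mem _ ha)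
  obtain ⟨rest, hrest⟩ := Multiset.exists_cons_of_mem hmem
  have hrest_nonneg : 0 ≤ rest.sum := by
    apply Multiset.sum_nonneg
    intro z hz
    have : z ∈ (T.map (·⁻¹)).map (fun z => z ^ 2) := hrest ▸ Multiset.mem_cons_of_mem hz
    obtain ⟨w, _, rfl⟩ := Multiset.mem_map.mp this
    positivity
  have hapos : 0 < a⁻¹ ^ 2 := by positivity
  rw [hrest, Multiset.sum_cons] at hsqsum
  linarith

/-! ### Reduction via derivatives of real-rooted polynomials -/

lemma deriv_step (N : ℕ) (S : Multiset ℝ) (hS : Multiset.card S = N + 1) :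
    ∃ T : Multiset ℝ, Multiset.card T = N ∧
      ∀ j ≤ N, ∃ c : ℝ, 0 < c ∧ T.esymm j = c * S.esymm j := by
  set f := (S.map (fun a => X - C a)).prod with hf
  have hmonic : f.Monic := monic_multiset_prod_of_monic _ _ fun a _ => monic_X_sub_C a
  have hdeg : f.natDegree = N + 1 := by
    rw [hf, natDegree_multiset_prod_X_sub_C_eq_card, hS]
  have hroots : f.roots = S := roots_multiset_prod_X_sub_C S
  set g := derivative f with hg
  have hcard1 : N + 1 ≤ Multiset.card g.roots + 1 := by
    have := Polynomial.card_roots_le_derivative f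
    rwa [hroots, hS, ← hg] at this
  have hgdeg_le : g.natDegree ≤ N := by
    have := natDegree_derivative_le f
    rw [← hg, hdeg] at this
    omega
  have hcard2 : Multiset.card g.roots ≤ g.natDegree := g.card_roots'
  have hgcard : Multiset.card g.roots = N := by omega
  have hgdeg : g.natDegree = N := by omega
  have hsplits : g.Splits :=
    splits_iff_card_roots.mpr (by omega)
  have hlead : g.leadingCoeff = (N : ℝ) + 1 := by
    rw [Polynomial.leadingCoeff, hgdeg, hg, Polynomial.coeff_derivative]
    rw [show N + 1 = f.natDegree from hdeg.symm, hmonic.coeff_natDegree]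
    ring
  refine ⟨g.roots, hgcard, fun j hj => ?_⟩
  have hN1 : ((N : ℝ) + 1) ≠ 0 := by positivity
  refine ⟨(((N - j : ℕ) : ℝ) + 1) / ((N : ℝ) + 1), by positivity, ?_⟩
  have e1 : g.coeff (N - j) = ((N : ℝ) + 1) * (-1) ^ j * g.roots.esymm j := by
    have h' : N - j ≤ g.natDegree := by omega
    rw [Polynomial.coeff_eq_esymm_roots_of_splits hsplits h', hlead, hgdeg]
    have hj' : N - (N - j) = j := by omega
    rw [hj', mul_assoc]
  have e2 : g.coeff (N - j) = f.coeff (N - j + 1) * (((N - j : ℕ) : ℝ) + 1) := by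
    rw [hg, Polynomial.coeff_derivative]
  have e3 : f.coeff (N - j + 1) = (-1) ^ j * S.esymm j := by
    have h'' : N - j + 1 ≤ Multiset.card S := by omega
    rw [hf, Multiset.prod_X_sub_C_coeff S h'']
    have : Multiset.card S - (N - j + 1) = j := by omega
    rw [this]
  rw [e3] at e2
  have heq := e1.symm.trans e2
  have hsign : ((-1 : ℝ) ^ j) ≠ 0 := pow_ne_zero _ (by norm_num)
  rw [div_mul_eq_mul_div, eq_div_iff hN1]
  apply mul_left_cancel₀ hsign
  linear_combination heq

lemma reduce : ∀ (d : ℕ) (S : Multiset ℝ) (m : ℕ), Multiset.card S = m + d →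
    ∃ T : Multiset ℝ, Multiset.card T = m ∧
      ∀ j ≤ m, ∃ c : ℝ, 0 < c ∧ T.esymm j = c * S.esymm j := by
  intro d
  induction d with
  | zero =>
    intro S m h
    exact ⟨S, by omega, fun j _ => ⟨1, one_pos, (one_mul _).symm⟩⟩
  | succ d ih =>
    intro S m h
    obtain ⟨T₁, hT₁c, hT₁⟩ := deriv_step (m + d) S (by omega)
    obtain ⟨T, hTc, hT⟩ := ih T₁ m hT₁c
    refine ⟨T, hTc, fun j hj => ?_⟩
    obtain ⟨c1, hc1, f1⟩ := hT j hj
    obtain ⟨c2, hc2, f2⟩ := hT₁ j (by omega)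
    exact ⟨c1 * c2, mul_pos hc1 hc2, by rw [f1, f2]; ring⟩

lemma no_vanish (S : Multiset ℝ) (j : ℕ) (hj : 1 ≤ j) (hjc : j + 1 ≤ Multiset.card S)
    (h0 : 0 ≤ S.esymm (j - 1)) (h1 : S.esymm j = 0) (h2 : 0 < S.esymm (j + 1)) : False := by
  obtain ⟨T, hTc, hT⟩ := reduce (Multiset.card S - (j + 1)) S (j + 1) (by omega)
  obtain ⟨c1, hc1, f1⟩ := hT (j + 1) le_rfl
  obtain ⟨c2, hc2, f2⟩ := hT j (by omega)
  obtain ⟨c3, hc3, f3⟩ := hT (j - 1) (by omega)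
  apply core T (by omega)
  · rw [hTc, f1]; exact mul_pos hc1 h2
  · rw [hTc, show j + 1 - 1 = j from by omega, f2, h1, mul_zero]
  · rw [hTc, show j + 1 - 2 = j - 1 from by omega, f3]
    exact mul_nonneg hc3.le h0

/-! ### Finset-level elementary symmetric functions -/

variable {n : ℕ}

noncomputable def esF (s : Finset (Fin n)) (j : ℕ) (x : Fin n → ℝ) : ℝ :=
  ∑ t ∈ s.powersetCard j, ∏ i ∈ t, x i

lemma esF_eq_esymm (s : Finset (Fin n)) (j : ℕ) (x : Fin n → ℝ) :
    esF s j x = (s.val.map x).esymm j :=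
  (Finset.esymm_map_val x s j).symm

lemma esym_eq_esF (j : ℕ) (x : Fin n → ℝ) : esym n j x = esF Finset.univ j x := rfl

lemma continuous_esF (s : Finset (Fin n)) (j : ℕ) :
    Continuous (fun x : Fin n → ℝ => esF s j x) := by
  apply continuous_finset_sum
  intro t _
  exact continuous_finset_prod t (fun i _ => continuous_apply i)

lemma univ_val_eq (i : Fin n) :
    (Finset.univ : Finset (Fin n)).val = i ::ₘ (Finset.univ.erase i).val := by
  conv_lhs => rw [← Finset.insert_erase (Finset.mem_univ i)]
  rw [Finset.insert_val_of_notMem (Finset.notMem_erase i _)]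

lemma erase_rec (x : Fin n → ℝ) (i : Fin n) (r : ℕ) :
    esym n (r + 1) x
      = esF (Finset.univ.erase i) (r + 1) x + x i * esF (Finset.univ.erase i) r x := by
  rw [esym_eq_esF, esF_eq_esymm, esF_eq_esymm, esF_eq_esymm, ← esymm_cons]
  rw [univ_val_eq i, Multiset.map_cons]

lemma telescope (x : Fin n → ℝ) (i : Fin n) (m : ℕ) :
    ∑ j ∈ Finset.range (m + 1), (-1 : ℝ) ^ j * esym n (m - j) x * x i ^ j
      = esF (Finset.univ.erase i) m x := by
  induction m with
  | zero =>
    rw [Finset.sum_range_one]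
    simp only [pow_zero, one_mul, mul_one, Nat.zero_sub]
    rw [esym_eq_esF, esF_eq_esymm, esF_eq_esymm, esymm_zero', esymm_zero']
  | succ m ih =>
    rw [Finset.sum_range_succ']
    have hstep : ∀ j ∈ Finset.range (m + 1),
        (-1 : ℝ) ^ (j + 1) * esym n (m + 1 - (j + 1)) x * x i ^ (j + 1)
          = (-(x i)) * ((-1 : ℝ) ^ j * esym n (m - j) x * x i ^ j) := by
      intro j _
      have h' : m + 1 - (j + 1) = m - j := by omega
      rw [h', pow_succ, pow_succ]
      ring
    rw [Finset.sum_congr rfl hstep, ← Finset.mul_sum, ih]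
    simp only [pow_zero, one_mul, mul_one, Nat.sub_zero]
    rw [erase_rec x i m]
    ring

/-! ### Matrix lemmas -/

lemma charpoly_conj (P A Q : Matrix (Fin n) (Fin n) ℝ) (hPQ : P * Q = 1) :
    (P * A * Q).charpoly = A.charpoly := by
  let φ : Matrix (Fin n) (Fin n) ℝ →+* Matrix (Fin n) (Fin n) (Polynomial ℝ) :=
    (Polynomial.C : ℝ →+* Polynomial ℝ).mapMatrix
  have hφ1 : φ P * φ Q = 1 := by rw [← _root_.map_mul φ P Q, hPQ, _root_.map_one φ]
  have key : Matrix.charmatrix (P * A * Q) = φ P * Matrix.charmatrix A * φ Q := by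
    show Matrix.scalar (Fin n) (Polynomial.X) - φ (P * A * Q)
      = φ P * (Matrix.scalar (Fin n) (Polynomial.X) - φ A) * φ Q
    rw [mul_sub, sub_mul, _root_.map_mul φ (P * A) Q, _root_.map_mul φ P A]
    congr 1
    have hcomm : Commute (Matrix.scalar (Fin n) (Polynomial.X : Polynomial ℝ)) (φ P) :=
      Matrix.scalar_commute _ (fun r' => Commute.all _ _) _
    rw [← hcomm.eq, mul_assoc, hφ1, mul_one]
  rw [Matrix.charpoly, Matrix.charpoly, key, Matrix.det_mul, Matrix.det_mul]
  have hdet : (φ P).det * (φ Q).det = 1 := by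
    rw [← Matrix.det_mul, hφ1, Matrix.det_one]
  calc (φ P).det * (Matrix.charmatrix A).det * (φ Q).det
      = (Matrix.charmatrix A).det * ((φ P).det * (φ Q).det) := by ring
    _ = (Matrix.charmatrix A).det := by rw [hdet, mul_one]

lemma charpoly_diagonal (v : Fin n → ℝ) :
    (Matrix.diagonal v).charpoly
      = ((Finset.univ.val.map v).map (fun a => Polynomial.X - Polynomial.C a)).prod := by
  have h1 : Matrix.charmatrix (Matrix.diagonal v)
      = Matrix.diagonal (fun i => (Polynomial.X : Polynomial ℝ) - Polynomial.C (v i)) := by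
    rw [← Matrix.ext_iff]
    intro i j
    by_cases h : i = j
    · subst h; rw [Matrix.charmatrix_apply_eq, Matrix.diagonal_apply_eq (fun i => (Polynomial.X : Polynomial ℝ) - Polynomial.C (v i)) i, Matrix.diagonal_apply_eq v i]
    · rw [Matrix.charmatrix_apply_ne _ _ _ h, Matrix.diagonal_apply_ne _ h,
        Matrix.diagonal_apply_ne _ h, map_zero, neg_zero]
  rw [Matrix.charpoly, h1, Matrix.det_diagonal, Multiset.map_map]
  exact Finset.prod_eq_multiset_prod _ _

lemma eig_multiset (A : Matrix (Fin n) (Fin n) ℝ) (hA : A.IsHermitian) :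
    Multiset.map hA.eigenvalues Finset.univ.val = A.charpoly.roots := by
  have hU := (Matrix.mem_unitaryGroup_iff).mp (Matrix.IsHermitian.eigenvectorUnitary hA).2
  have h1 : A.charpoly = (Matrix.diagonal hA.eigenvalues).charpoly := by
    conv_lhs => rw [hA.spectral_theorem]
    have hof : (RCLike.ofReal ∘ hA.eigenvalues) = hA.eigenvalues := by
      funext i
      simp [RCLike.ofReal_real_eq_id]
    rw [hof]
    exact charpoly_conj _ _ _ hU
  rw [h1, charpoly_diagonal, Polynomial.roots_multiset_prod_X_sub_C]

lemma msigma_diag (lam : Fin n → ℝ) (q : ℕ) :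
    msigma q (Matrix.diagonal lam) = esym n q lam := by
  have hH : (Matrix.diagonal lam).IsHermitian := Matrix.isHermitian_diagonal lam
  rw [msigma, dif_pos hH]
  have h1 := eig_multiset _ hH
  have h2 : Multiset.map lam Finset.univ.val = (Matrix.diagonal lam).charpoly.roots := by
    rw [charpoly_diagonal, Polynomial.roots_multiset_prod_X_sub_C]
  rw [esym_eq_esF, esym_eq_esF, esF_eq_esymm, esF_eq_esymm]
  show (Multiset.map hH.eigenvalues Finset.univ.val).esymm q
    = (Multiset.map lam Finset.univ.val).esymm q
  rw [h1, ← h2]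

lemma newton_diag_entry (lam : Fin n → ℝ) (q : ℕ) (i : Fin n) :
    newton q (Matrix.diagonal lam) i i
      = ∑ j ∈ Finset.range (q + 1), (-1 : ℝ) ^ j * esym n (q - j) lam * lam i ^ j := by
  rw [newton, Matrix.sum_apply]
  apply Finset.sum_congr rfl
  intro j _
  rw [Matrix.smul_apply, smul_eq_mul, Matrix.diagonal_pow, Matrix.diagonal_apply_eq,
    msigma_diag, Pi.pow_apply, mul_assoc]

/-! ### Positivity on the cone -/

def Pset (n k : ℕ) : Set (Fin n → ℝ) :=
  {x | ∀ i : Fin n, ∀ j ∈ Finset.Icc 1 (k - 1), 0 < esF (Finset.univ.erase i) j x}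

def Bset (n k : ℕ) : Set (Fin n → ℝ) :=
  {x | ∀ i : Fin n, ∀ j ∈ Finset.Icc 1 (k - 1), 0 ≤ esF (Finset.univ.erase i) j x}

lemma strict {k : ℕ} (h2 : 2 ≤ k) {x : Fin n → ℝ}
    (hx : 0 < esym n k x) (hB : x ∈ Bset n k) : x ∈ Pset n k := by
  intro i j hj
  rw [Finset.mem_Icc] at hj
  set M := (Finset.univ.erase i).val.map x with hM
  have hesF : ∀ r, esF (Finset.univ.erase i) r x = M.esymm r := fun r => esF_eq_esymm _ r x
  have hBM : ∀ r, 1 ≤ r → r ≤ k - 1 → 0 ≤ M.esymm r := by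
    intro r h1 h2'
    rw [← hesF]
    exact hB i r (Finset.mem_Icc.mpr ⟨h1, h2'⟩)
  have hMlow : ∀ r, 1 ≤ r → r ≤ k - 1 → 0 ≤ M.esymm (r - 1) := by
    intro r h1 _h2
    rcases Nat.eq_or_lt_of_le h1 with h | h
    · rw [← h]
      simp [esymm_zero']
    · exact hBM (r - 1) (by omega) (by omega)
  have htop : 0 < M.esymm (k - 1) := by
    by_contra hnot
    push_neg at hnot
    have h0 : M.esymm (k - 1) = 0 := le_antisymm hnot (hBM (k - 1) (by omega) le_rfl)
    have hrec := erase_rec x i (k - 1)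
    rw [show k - 1 + 1 = k from by omega] at hrec
    rw [hesF, hesF, h0, mul_zero, add_zero] at hrec
    have hk0 : 0 < M.esymm k := by rw [hrec] at hx; exact hx
    have hcard : k ≤ Multiset.card M := by
      by_contra hc
      push_neg at hc
      rw [esymm_of_card_lt hc] at hk0
      exact lt_irrefl _ hk0
    exact no_vanish M (k - 1) (by omega)
      (by rw [show k - 1 + 1 = k from by omega]; exact hcard)
      (hMlow (k - 1) (by omega) le_rfl) h0
      (by rw [show k - 1 + 1 = k from by omega]; exact hk0)
  have desc : ∀ d : ℕ, 1 ≤ k - 1 - d → 0 < M.esymm (k - 1 - d) := by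
    intro d
    induction d with
    | zero => intro _; simpa using htop
    | succ d ih =>
      intro h1
      set r := k - 1 - (d + 1) with hr
      have hrd : r + 1 = k - 1 - d := by omega
      have hprev : 0 < M.esymm (r + 1) := by rw [hrd]; exact ih (by omega)
      by_contra hnot
      push_neg at hnot
      have h0 : M.esymm r = 0 := le_antisymm hnot (hBM r (by omega) (by omega))
      have hcard : r + 1 ≤ Multiset.card M := by
        by_contra hc
        push_neg at hc
        rw [esymm_of_card_lt hc] at hprev
        exact lt_irrefl _ hprev
      exact no_vanish M r (by omega) hcard (hMlow r (by omega) (by omega)) h0 hprev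
  have hfin := desc (k - 1 - j) (by omega)
  rw [show k - 1 - (k - 1 - j) = j from by omega] at hfin
  rw [hesF]
  exact hfin

lemma isOpen_S (n k : ℕ) : IsOpen {x : Fin n → ℝ | 0 < esym n k x} :=
  isOpen_lt continuous_const (continuous_esF Finset.univ k)

lemma one_mem_S {k : ℕ} (hk : k ≤ n) : (0 : ℝ) < esym n k (fun _ => 1) := by
  rw [esym]
  rw [Finset.sum_congr rfl (fun s _ => Finset.prod_const_one), Finset.sum_const,
    nsmul_eq_mul, mul_one, Finset.card_powersetCard, Finset.card_univ, Fintype.card_fin]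
  exact_mod_cast Nat.choose_pos hk

lemma Gamma_one {k : ℕ} (hk : k ≤ n) : (fun _ => (1 : ℝ)) ∈ Gamma n k :=
  mem_connectedComponentIn (one_mem_S hk)

lemma ones_esF (i : Fin n) (j : ℕ) (hj : j ≤ n - 1) :
    0 < esF (Finset.univ.erase i) j (fun _ => (1 : ℝ)) := by
  rw [esF]
  rw [Finset.sum_congr rfl (fun s _ => Finset.prod_const_one), Finset.sum_const,
    nsmul_eq_mul, mul_one, Finset.card_powersetCard, Finset.card_erase_of_mem
    (Finset.mem_univ i), Finset.card_univ, Fintype.card_fin]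
  exact_mod_cast Nat.choose_pos hj

lemma Gamma_subset_P {k : ℕ} (h2 : 2 ≤ k) (hk : k ≤ n) : Gamma n k ⊆ Pset n k := by
  have hPopen : IsOpen (Pset n k) := by
    have hPeq : Pset n k = ⋂ i : Fin n, ⋂ j ∈ (Finset.Icc 1 (k - 1) : Finset ℕ),
        {x : Fin n → ℝ | 0 < esF (Finset.univ.erase i) j x} := by
      ext x
      simp only [Pset, Set.mem_setOf_eq, Set.mem_iInter, Finset.mem_Icc, and_imp]
    rw [hPeq]
    exact isOpen_iInter_of_finite fun i => isOpen_biInter_finset fun j _ =>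
      isOpen_lt continuous_const (continuous_esF _ j)
  have hBclosed : IsClosed (Bset n k) := by
    have hBeq : Bset n k = ⋂ i : Fin n, ⋂ j ∈ (Finset.Icc 1 (k - 1) : Finset ℕ),
        {x : Fin n → ℝ | 0 ≤ esF (Finset.univ.erase i) j x} := by
      ext x
      simp only [Bset, Set.mem_setOf_eq, Set.mem_iInter, Finset.mem_Icc, and_imp]
    rw [hBeq]
    exact isClosed_iInter fun i => isClosed_iInter fun j => isClosed_iInter fun _ =>
      isClosed_le continuous_const (continuous_esF _ j)
  apply IsPreconnected.subset_left_of_subset_union hPopen hBclosed.isOpen_compl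
  · exact Set.disjoint_left.mpr fun x hxP hxBc => hxBc fun i j hj => (hxP i j hj).le
  · intro x hx
    by_cases hB : x ∈ Bset n k
    · have hxS : x ∈ {y : Fin n → ℝ | 0 < esym n k y} := connectedComponentIn_subset _ _ hx
      exact Or.inl (strict h2 hxS hB)
    · exact Or.inr hB
  · exact ⟨fun _ => 1, Gamma_one hk, fun i j hj =>
      ones_esF i j (by rw [Finset.mem_Icc] at hj; omega)⟩
  · exact isPreconnected_connectedComponentIn

lemma closure_mem {k : ℕ} {x : Fin n → ℝ}
    (hx : x ∈ closure (Gamma n k)) (hpos : 0 < esym n k x) : x ∈ Gamma n k := by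
  set S := {y : Fin n → ℝ | 0 < esym n k y} with hS
  have hopen : IsOpen (connectedComponentIn S x) := (isOpen_S n k).connectedComponentIn
  have hmem : x ∈ connectedComponentIn S x := mem_connectedComponentIn hpos
  obtain ⟨y, hy1, hy2⟩ := mem_closure_iff.mp hx _ hopen hmem
  have e1 : connectedComponentIn S x = connectedComponentIn S y := connectedComponentIn_eq hy1
  have e2 : Gamma n k = connectedComponentIn S y := connectedComponentIn_eq hy2
  rw [e2, ← e1]
  exact hmem

end NDLB

/-- If `k ≥ 2`, `A` is symmetric with eigenvalues in `Γ_k^+`, the eigenvalues are bounded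
by `C`, `σ_k(A) ≥ c₁ > 0` and `T_{k-1}(A)` is positive definite, then the diagonal entries
of `T_{k-1}(A)` in an eigenbasis of `A` (i.e. the diagonal entries of
`T_{k-1}(diag(λ(A)))`) are bounded below by `1/C' > 0`, with `C'` depending only on
`C, n, k` and the lower bound `c₁` for `σ_k(A)`. -/
theorem newton_diagonal_lower_bound {n k : ℕ} (h2 : 2 ≤ k) (hk : k ≤ n)
    (C c₁ : ℝ) (hc₁ : 0 < c₁) :
    ∃ C' : ℝ, 0 < C' ∧ ∀ (A : Matrix (Fin n) (Fin n) ℝ) (hA : A.IsHermitian),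
      hA.eigenvalues ∈ Gamma n k → (∀ i, |hA.eigenvalues i| ≤ C) →
      (newton (k - 1) A).PosDef → c₁ ≤ msigma k A →
      ∀ i, 1 / C' ≤ newton (k - 1) (Matrix.diagonal hA.eigenvalues) i i := by
  classical
  have hn : 0 < n := by omega
  set Kset : Set (Fin n → ℝ) :=
    {x | (∀ i, |x i| ≤ C) ∧ x ∈ closure (Gamma n k) ∧ c₁ ≤ esym n k x} with hKdef
  have hKpos : ∀ x ∈ Kset, ∀ i : Fin n, 0 < NDLB.esF (Finset.univ.erase i) (k - 1) x := by
    intro x hx i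
    have hxG : x ∈ Gamma n k := NDLB.closure_mem hx.2.1 (lt_of_lt_of_le hc₁ hx.2.2)
    exact NDLB.Gamma_subset_P h2 hk hxG i (k - 1) (Finset.mem_Icc.mpr ⟨by omega, le_rfl⟩)
  have hex : ∃ δ : ℝ, 0 < δ ∧
      ∀ x ∈ Kset, ∀ i : Fin n, δ ≤ NDLB.esF (Finset.univ.erase i) (k - 1) x := by
    rcases Set.eq_empty_or_nonempty Kset with hK | hK
    · exact ⟨1, one_pos, fun x hx i => absurd (hK ▸ hx) (Set.notMem_empty x)⟩
    · have hKc : IsCompact Kset := by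
        rw [Metric.isCompact_iff_isClosed_bounded]
        constructor
        · have hKeq : Kset = (⋂ i : Fin n, {x : Fin n → ℝ | |x i| ≤ C}) ∩
              (closure (Gamma n k) ∩ {x | c₁ ≤ esym n k x}) := by
            ext x
            simp only [hKdef, Set.mem_setOf_eq, Set.mem_inter_iff, Set.mem_iInter]
          rw [hKeq]
          refine IsClosed.inter (isClosed_iInter fun i => ?_)
            (IsClosed.inter isClosed_closure ?_)
          · exact isClosed_le ((continuous_apply i).abs) continuous_const
          · exact isClosed_le continuous_const (NDLB.continuous_esF Finset.univ k)
        · apply Bornology.IsBounded.subset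
            (Metric.isBounded_closedBall (x := (0 : Fin n → ℝ)) (r := max C 0))
          intro x hx
          rw [Metric.mem_closedBall, dist_zero_right]
          refine (pi_norm_le_iff_of_nonneg (le_max_right C 0)).mpr fun i => ?_
          rw [Real.norm_eq_abs]
          exact (hx.1 i).trans (le_max_left C 0)
      have hne : Nonempty (Fin n) := ⟨⟨0, hn⟩⟩
      have hmin : ∀ i : Fin n, ∃ m : ℝ,
          IsLeast ((fun x => NDLB.esF (Finset.univ.erase i) (k - 1) x) '' Kset) m :=
        fun i => (hKc.image_of_continuousOn (NDLB.continuous_esF _ _).continuousOn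
          ).exists_isLeast (hK.image _)
      choose m hm using hmin
      refine ⟨Finset.univ.inf' Finset.univ_nonempty m, ?_, ?_⟩
      · rw [Finset.lt_inf'_iff]
        intro i _
        obtain ⟨x, hxK, hfx⟩ := (hm i).1
        rw [← hfx]
        exact hKpos x hxK i
      · intro x hx i
        exact (Finset.inf'_le m (Finset.mem_univ i)).trans ((hm i).2 ⟨x, hx, rfl⟩)
  obtain ⟨δ, hδ, hδle⟩ := hex
  refine ⟨1 / δ, by positivity, ?_⟩
  intro A hA hGam hbd _hposdef hsig i
  rw [one_div_one_div]
  have hsig' : c₁ ≤ esym n k hA.eigenvalues := by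
    rwa [msigma, dif_pos hA] at hsig
  have hKmem : hA.eigenvalues ∈ Kset := ⟨hbd, subset_closure hGam, hsig'⟩
  have hentry : newton (k - 1) (Matrix.diagonal hA.eigenvalues) i i
      = NDLB.esF (Finset.univ.erase i) (k - 1) hA.eigenvalues := by
    rw [NDLB.newton_diag_entry, NDLB.telescope]
  rw [hentry]
  exact hδle _ hKmem i
end

section
/- Given real numbers δ₁ < δ₂, there exist constants c₁ > 0, c₂ > −δ₁, and p > 0 such that the function φ(s) = c₁(c₂ + s)^p satisfies φ'(s) > 0 and φ''(s) − φ'(s)² − φ'(s) > 0 for all s ∈ (δ₁, δ₂). -/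
/-- Given `δ₁ < δ₂`, there are constants `c₁ > 0`, `c₂ > -δ₁`, `p > 0` such that
`φ(s) = c₁ (c₂ + s)^p` satisfies `φ'(s) > 0` and `φ''(s) - φ'(s)² - φ'(s) > 0` on
`(δ₁, δ₂)`, where `φ'(s) = p c₁ (c₂+s)^{p-1}` and `φ''(s) = p (p-1) c₁ (c₂+s)^{p-2}`. -/
theorem test_function_increasing (δ₁ δ₂ : ℝ) (h : δ₁ < δ₂) :
    ∃ c₁ c₂ p : ℝ, 0 < c₁ ∧ -δ₁ < c₂ ∧ 0 < p ∧
      ∀ s ∈ Set.Ioo δ₁ δ₂,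
        HasDerivAt (fun x : ℝ => c₁ * Real.rpow (c₂ + x) p)
          (p * c₁ * Real.rpow (c₂ + s) (p - 1)) s ∧
        HasDerivAt (fun x : ℝ => p * c₁ * Real.rpow (c₂ + x) (p - 1))
          (p * (p - 1) * c₁ * Real.rpow (c₂ + s) (p - 2)) s ∧
        0 < p * c₁ * Real.rpow (c₂ + s) (p - 1) ∧
        0 < p * (p - 1) * c₁ * Real.rpow (c₂ + s) (p - 2)
              - (p * c₁ * Real.rpow (c₂ + s) (p - 1)) ^ 2
              - p * c₁ * Real.rpow (c₂ + s) (p - 1) := by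
  have hrw : ∀ a b : ℝ, Real.rpow a b = a ^ b := fun _ _ => rfl
  obtain ⟨M, hM⟩ : ∃ M : ℝ, M = δ₂ - δ₁ + 1 := ⟨_, rfl⟩
  have hM1 : 1 < M := by rw [hM]; linarith
  obtain ⟨p, hp⟩ : ∃ p : ℝ, p = M + 3 := ⟨_, rfl⟩
  have hp0 : (0:ℝ) < p := by rw [hp]; linarith
  have hMp0 : (0:ℝ) < M ^ p := Real.rpow_pos_of_pos (by linarith) p
  obtain ⟨c₁, hc₁⟩ : ∃ c₁ : ℝ, c₁ = 1 / (p * M ^ p) := ⟨_, rfl⟩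
  have hc₁0 : 0 < c₁ := by rw [hc₁]; positivity
  refine ⟨c₁, 1 - δ₁, p, hc₁0, by linarith, hp0, ?_⟩
  rintro s ⟨hs1, hs2⟩
  simp only [hrw]
  have ht1 : 1 < 1 - δ₁ + s := by linarith
  set t : ℝ := 1 - δ₁ + s with ht
  have ht0 : 0 < t := by linarith
  have htM : t < M := by rw [ht, hM]; linarith
  have ht2pos : 0 < t ^ (p - 2) := Real.rpow_pos_of_pos ht0 _
  have ht1pos : 0 < t ^ (p - 1) := Real.rpow_pos_of_pos ht0 _
  -- derivative facts
  have hd0 : HasDerivAt (fun x : ℝ => 1 - δ₁ + x) 1 s := (hasDerivAt_id s).const_add _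
  have hd1 : HasDerivAt (fun x : ℝ => c₁ * (1 - δ₁ + x) ^ p) (p * c₁ * t ^ (p - 1)) s := by
    have := (hd0.rpow_const (p := p) (Or.inl (ne_of_gt ht0))).const_mul c₁
    convert this using 1
    · rfl
    · rfl
    rw [← ht]; ring
  have hd2 : HasDerivAt (fun x : ℝ => p * c₁ * (1 - δ₁ + x) ^ (p - 1))
      (p * (p - 1) * c₁ * t ^ (p - 2)) s := by
    have := (hd0.rpow_const (p := p - 1) (Or.inl (ne_of_gt ht0))).const_mul (p * c₁)
    have e : p - 1 - 1 = p - 2 := by ring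
    rw [e] at this
    convert this using 1
    · rfl
    · rfl
    rw [← ht]; ring
  refine ⟨hd1, hd2, by positivity, ?_⟩
  -- key inequality
  have e1 : t ^ (p - 1) = t ^ (p - 2) * t := by
    rw [← Real.rpow_add_one (ne_of_gt ht0)]
    congr 1; ring
  have e2 : t ^ (p - 1) * t ^ (p - 1) = t ^ (p - 2) * t ^ p := by
    rw [← Real.rpow_add ht0, ← Real.rpow_add ht0]
    congr 1; ring
  have htp : t ^ p < M ^ p := Real.rpow_lt_rpow (le_of_lt ht0) htM hp0
  have htp0 : 0 < t ^ p := Real.rpow_pos_of_pos ht0 p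
  have hsmall : p * c₁ * t ^ p < 1 := by
    have hval : p * c₁ * t ^ p = t ^ p / M ^ p := by
      rw [hc₁]; field_simp
    rw [hval, div_lt_one hMp0]; exact htp
  have hkey : 0 < p - 1 - p * c₁ * t ^ p - t := by
    rw [hp]; rw [hp] at hsmall; linarith
  have expand : p * (p - 1) * c₁ * t ^ (p - 2) - (p * c₁ * t ^ (p - 1)) ^ 2
        - p * c₁ * t ^ (p - 1)
      = p * c₁ * t ^ (p - 2) * (p - 1 - p * c₁ * t ^ p - t) := by
    rw [sq, show p * c₁ * t ^ (p - 1) * (p * c₁ * t ^ (p - 1))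
        = p * c₁ * (p * c₁ * (t ^ (p - 1) * t ^ (p - 1))) from by ring, e2, e1]
    ring
  rw [expand]
  exact mul_pos (mul_pos (mul_pos hp0 hc₁0) ht2pos) hkey
end

section
/- Given real numbers δ₁ < δ₂, there exist constants c₁, c₂, p such that φ(s) = c₁(c₂ + s)^p satisfies φ'(s) < 0 and φ''(s) − φ'(s)² − φ'(s) > 0 for all s ∈ (δ₁, δ₂). -/
/-- Given `δ₁ < δ₂`, there are constants `c₁, c₂, p` with `c₂ + s > 0` on `(δ₁, δ₂)` such
that `φ(s) = c₁ (c₂ + s)^p` satisfies `φ'(s) < 0` and `φ''(s) - φ'(s)² - φ'(s) > 0` on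
`(δ₁, δ₂)`, where `φ'(s) = p c₁ (c₂+s)^{p-1}` and `φ''(s) = p (p-1) c₁ (c₂+s)^{p-2}`. -/
theorem test_function_decreasing (δ₁ δ₂ : ℝ) (h : δ₁ < δ₂) :
    ∃ c₁ c₂ p : ℝ, (∀ s ∈ Set.Ioo δ₁ δ₂, 0 < c₂ + s) ∧
      ∀ s ∈ Set.Ioo δ₁ δ₂,
        HasDerivAt (fun x : ℝ => c₁ * Real.rpow (c₂ + x) p)
          (p * c₁ * Real.rpow (c₂ + s) (p - 1)) s ∧
        HasDerivAt (fun x : ℝ => p * c₁ * Real.rpow (c₂ + x) (p - 1))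
          (p * (p - 1) * c₁ * Real.rpow (c₂ + s) (p - 2)) s ∧
        p * c₁ * Real.rpow (c₂ + s) (p - 1) < 0 ∧
        0 < p * (p - 1) * c₁ * Real.rpow (c₂ + s) (p - 2)
              - (p * c₁ * Real.rpow (c₂ + s) (p - 1)) ^ 2
              - p * c₁ * Real.rpow (c₂ + s) (p - 1) := by
  refine ⟨1, 1 - δ₁, -1, fun s hs => by linarith [hs.1], fun s hs => ?_⟩
  have ht : (1:ℝ) < 1 - δ₁ + s := by linarith [hs.1]
  have ht0 : (0:ℝ) < 1 - δ₁ + s := by linarith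
  set t : ℝ := 1 - δ₁ + s with htdef
  simp only [Real.rpow_eq_pow]
  have hd1 : HasDerivAt (fun x : ℝ => (1 - δ₁ + x)) 1 s := by
    simpa using (hasDerivAt_id s).const_add (1 - δ₁)
  have h1 : HasDerivAt (fun x : ℝ => (1:ℝ) * (1 - δ₁ + x) ^ (-1 : ℝ))
      ((-1 : ℝ) * 1 * t ^ ((-1 : ℝ) - 1)) s := by
    have := (hd1.rpow_const (p := -1) (Or.inl (ne_of_gt ht0))).const_mul (1:ℝ)
    refine this.congr_deriv ?_
    rw [htdef]; ring
  have h2 : HasDerivAt (fun x : ℝ => (-1 : ℝ) * 1 * (1 - δ₁ + x) ^ ((-1 : ℝ) - 1))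
      ((-1 : ℝ) * ((-1 : ℝ) - 1) * 1 * t ^ ((-1 : ℝ) - 2)) s := by
    have := (hd1.rpow_const (p := (-1 : ℝ) - 1) (Or.inl (ne_of_gt ht0))).const_mul
      ((-1 : ℝ) * 1)
    refine this.congr_deriv ?_
    rw [htdef]; norm_num
  refine ⟨h1, h2, ?_, ?_⟩
  · have := Real.rpow_pos_of_pos ht0 ((-1 : ℝ) - 1)
    nlinarith
  · have hp3 : (0:ℝ) < t ^ ((-1 : ℝ) - 2) := Real.rpow_pos_of_pos ht0 _
    have hp2 : (0:ℝ) < t ^ ((-1 : ℝ) - 1) := Real.rpow_pos_of_pos ht0 _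
    have hsq : (t ^ ((-1 : ℝ) - 1)) ^ 2 = t ^ (-4 : ℝ) := by
      rw [sq, ← Real.rpow_add ht0]; norm_num
    have hlt : t ^ (-4 : ℝ) < t ^ ((-1 : ℝ) - 2) := by
      apply Real.rpow_lt_rpow_left_iff ht |>.2
      norm_num
    nlinarith
end

section
/- In a normal coordinate system centered at p on a Riemannian manifold (M,g), for any covector u one has at p: Σ_{l,m} (∂_i ∂_j g^{lm} + 2 ∂_l Γ^m_{ij}) u_l u_m = 2 Σ_{l,m} R_{iljm} u_l u_m, where R_{iljm} are the components of the Riemann curvature tensor of g at p. -/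
open Matrix Finset

/-- Partial derivative `∂_i f` of a function on `ℝⁿ`. -/
noncomputable def pd {n : ℕ} (i : Fin n) (f : (Fin n → ℝ) → ℝ) (x : Fin n → ℝ) : ℝ :=
  fderiv ℝ f x (Pi.single i 1)

/-- Christoffel symbols `Γ^m_{ij} = ½ g^{ml}(∂_i g_{jl} + ∂_j g_{il} - ∂_l g_{ij})`
of a metric `g` given in coordinates. -/
noncomputable def christoffel {n : ℕ} (g : (Fin n → ℝ) → Matrix (Fin n) (Fin n) ℝ)
    (m i j : Fin n) (x : Fin n → ℝ) : ℝ :=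
  (1 / 2) * ∑ l, (g x)⁻¹ m l *
    (pd i (fun y => g y j l) x + pd j (fun y => g y i l) x - pd l (fun y => g y i j) x)

/-- Components `R_{iljm}` of the Riemann curvature tensor (all indices lowered). -/
noncomputable def riemann {n : ℕ} (g : (Fin n → ℝ) → Matrix (Fin n) (Fin n) ℝ)
    (i l j m : Fin n) (x : Fin n → ℝ) : ℝ :=
  ∑ s, g x m s *
    (pd l (christoffel g s i j) x - pd i (christoffel g s l j) x
      + ∑ r, (christoffel g s l r x * christoffel g r i j x
            - christoffel g s i r x * christoffel g r l j x))

/-- Ricci tensor `Ric_{jk} = ∂_i Γ^i_{jk} - ∂_j Γ^i_{ik} + Γ^i_{ip}Γ^p_{jk} - Γ^i_{jp}Γ^p_{ik}`. -/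
noncomputable def ricci {n : ℕ} (g : (Fin n → ℝ) → Matrix (Fin n) (Fin n) ℝ)
    (j k : Fin n) (x : Fin n → ℝ) : ℝ :=
  ∑ i, (pd i (christoffel g i j k) x - pd j (christoffel g i i k) x)
    + ∑ i, ∑ p, (christoffel g i i p x * christoffel g p j k x
        - christoffel g i j p x * christoffel g p i k x)

/-- Scalar curvature `R = g^{jk} Ric_{jk}`. -/
noncomputable def scalarCurv {n : ℕ} (g : (Fin n → ℝ) → Matrix (Fin n) (Fin n) ℝ)
    (x : Fin n → ℝ) : ℝ :=
  ∑ j, ∑ k, (g x)⁻¹ j k * ricci g j k x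

/-- The tensor `A^t = (1/(n-2)) (Ric - (t/(2(n-1))) R g)`. -/
noncomputable def schoutenT {n : ℕ} (t : ℝ) (g : (Fin n → ℝ) → Matrix (Fin n) (Fin n) ℝ)
    (i j : Fin n) (x : Fin n → ℝ) : ℝ :=
  (1 / ((n : ℝ) - 2)) *
    (ricci g i j x - t / (2 * ((n : ℝ) - 1)) * scalarCurv g x * g x i j)

/-- Covariant Hessian `(∇²w)_{ij} = ∂_i ∂_j w - Γ^k_{ij} ∂_k w`. -/
noncomputable def hess {n : ℕ} (g : (Fin n → ℝ) → Matrix (Fin n) (Fin n) ℝ)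
    (w : (Fin n → ℝ) → ℝ) (i j : Fin n) (x : Fin n → ℝ) : ℝ :=
  pd i (pd j w) x - ∑ k, christoffel g k i j x * pd k w x

/-- Laplacian `Δw = g^{ij} (∇²w)_{ij}`. -/
noncomputable def lap {n : ℕ} (g : (Fin n → ℝ) → Matrix (Fin n) (Fin n) ℝ)
    (w : (Fin n → ℝ) → ℝ) (x : Fin n → ℝ) : ℝ :=
  ∑ i, ∑ j, (g x)⁻¹ i j * hess g w i j x

/-- `|∇w|² = g^{ij} ∂_i w ∂_j w`. -/
noncomputable def gradsq {n : ℕ} (g : (Fin n → ℝ) → Matrix (Fin n) (Fin n) ℝ)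
    (w : (Fin n → ℝ) → ℝ) (x : Fin n → ℝ) : ℝ :=
  ∑ i, ∑ j, (g x)⁻¹ i j * pd i w x * pd j w x

section NCHelpers

variable {n : ℕ}

lemma pd_const (c : ℝ) (k : Fin n) (x : Fin n → ℝ) : pd k (fun _ => c) x = 0 := by
  simp [pd]

lemma pd_add {f h : (Fin n → ℝ) → ℝ} {x : Fin n → ℝ} (hf : DifferentiableAt ℝ f x)
    (hh : DifferentiableAt ℝ h x) (k : Fin n) :
    pd k (fun y => f y + h y) x = pd k f x + pd k h x := by
  simp only [pd, fderiv_fun_add hf hh, ContinuousLinearMap.add_apply]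

lemma pd_sub {f h : (Fin n → ℝ) → ℝ} {x : Fin n → ℝ} (hf : DifferentiableAt ℝ f x)
    (hh : DifferentiableAt ℝ h x) (k : Fin n) :
    pd k (fun y => f y - h y) x = pd k f x - pd k h x := by
  simp only [pd, fderiv_fun_sub hf hh, ContinuousLinearMap.sub_apply]

lemma pd_mul {f h : (Fin n → ℝ) → ℝ} {x : Fin n → ℝ} (hf : DifferentiableAt ℝ f x)
    (hh : DifferentiableAt ℝ h x) (k : Fin n) :
    pd k (fun y => f y * h y) x = f x * pd k h x + h x * pd k f x := by
  simp only [pd, fderiv_fun_mul hf hh, ContinuousLinearMap.add_apply,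
    ContinuousLinearMap.smul_apply, smul_eq_mul]

lemma pd_const_mul {f : (Fin n → ℝ) → ℝ} {x : Fin n → ℝ} (hf : DifferentiableAt ℝ f x)
    (c : ℝ) (k : Fin n) :
    pd k (fun y => c * f y) x = c * pd k f x := by
  simp only [pd, fderiv_const_mul hf c, ContinuousLinearMap.smul_apply, smul_eq_mul]

lemma pd_sum {f : Fin n → (Fin n → ℝ) → ℝ} {x : Fin n → ℝ}
    (hf : ∀ s, DifferentiableAt ℝ (f s) x) (k : Fin n) :
    pd k (fun y => ∑ s, f s y) x = ∑ s, pd k (f s) x := by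
  simp only [pd, fderiv_fun_sum fun s _ => hf s, ContinuousLinearMap.sum_apply]

lemma contDiff_pd {f : (Fin n → ℝ) → ℝ} (hf : ContDiff ℝ (⊤ : ℕ∞) f) (k : Fin n) :
    ContDiff ℝ (⊤ : ℕ∞) (pd k f) := by
  have h1 : pd k f = fun x =>
      (ContinuousLinearMap.apply ℝ ℝ (Pi.single k (1 : ℝ))) (fderiv ℝ f x) := rfl
  rw [h1]
  exact (ContinuousLinearMap.apply ℝ ℝ _).contDiff.comp (hf.fderiv_right (m := (⊤ : ℕ∞)) (by exact_mod_cast le_top))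

lemma contDiff_det {M : (Fin n → ℝ) → Matrix (Fin n) (Fin n) ℝ}
    (h : ∀ a b, ContDiff ℝ (⊤ : ℕ∞) fun x => M x a b) :
    ContDiff ℝ (⊤ : ℕ∞) fun x => (M x).det := by
  simp only [Matrix.det_apply']
  exact ContDiff.sum fun σ _ => contDiff_const.mul (contDiff_prod fun i _ => h (σ i) i)

lemma contDiff_inv_entry {g : (Fin n → ℝ) → Matrix (Fin n) (Fin n) ℝ}
    (hg : ∀ i j, ContDiff ℝ (⊤ : ℕ∞) fun x => g x i j)
    (hpos : ∀ x, (g x).PosDef) (a b : Fin n) :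
    ContDiff ℝ (⊤ : ℕ∞) fun x => (g x)⁻¹ a b := by
  have hdet : ContDiff ℝ (⊤ : ℕ∞) fun x => (g x).det := contDiff_det hg
  have hne : ∀ x, (g x).det ≠ 0 := fun x => (hpos x).det_pos.ne'
  have hadj : ContDiff ℝ (⊤ : ℕ∞) fun x => (g x).adjugate a b := by
    simp only [Matrix.adjugate_apply]
    apply contDiff_det
    intro c d
    by_cases hcb : c = b
    · simp only [Matrix.updateRow_apply, hcb, if_true]
      exact contDiff_const
    · simp only [Matrix.updateRow_apply, hcb, if_false]
      exact hg c d
  have heq : (fun x => (g x)⁻¹ a b) = fun x => ((g x).det)⁻¹ * (g x).adjugate a b := by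
    funext x
    rw [Matrix.inv_def]
    simp [Ring.inverse_eq_inv']
  rw [heq]
  exact (hdet.inv hne).mul hadj

/-- `∂_{k₁}∂_{k₂} g_{ab}` at `p`. -/
noncomputable def pdd (g : (Fin n → ℝ) → Matrix (Fin n) (Fin n) ℝ) (p : Fin n → ℝ)
    (k1 k2 a b : Fin n) : ℝ :=
  pd k1 (fun y => pd k2 (fun z => g z a b) y) p

lemma nc_alg (P : Fin n → Fin n → Fin n → Fin n → ℝ) (u : Fin n → ℝ) (i j : Fin n)
    (hsym : ∀ k1 k2 a b, P k1 k2 a b = P k1 k2 b a) :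
    ∑ l, ∑ m, (-(P i j l m) + (P l i j m + P l j i m - P l m i j)) * (u l * u m)
      = ∑ l, ∑ m, (2 * ((1/2) * (P l i j m + P l j i m - P l m i j)
          - (1/2) * (P i l j m + P i j l m - P i m l j))) * (u l * u m) := by
  have hs : ∑ l, ∑ m, P i m l j * (u l * u m) = ∑ l, ∑ m, P i l j m * (u l * u m) := by
    rw [Finset.sum_comm]
    refine Finset.sum_congr rfl fun a _ => Finset.sum_congr rfl fun b _ => ?_
    rw [hsym]; ring
  rw [← sub_eq_zero, ← Finset.sum_sub_distrib]
  simp only [← Finset.sum_sub_distrib]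
  have key : ∀ l m : Fin n,
      (-(P i j l m) + (P l i j m + P l j i m - P l m i j)) * (u l * u m)
        - (2 * ((1/2) * (P l i j m + P l j i m - P l m i j)
          - (1/2) * (P i l j m + P i j l m - P i m l j))) * (u l * u m)
      = P i l j m * (u l * u m) - P i m l j * (u l * u m) := by
    intro l m; ring
  simp only [key]
  simp only [Finset.sum_sub_distrib]
  rw [hs, sub_self]

end NCHelpers

/-- In normal coordinates at `p` (`g(p) = δ`, `Γ(p) = 0`), for any covector `u`:
`Σ_{l,m} (∂_i ∂_j g^{lm} + 2 ∂_l Γ^m_{ij}) u_l u_m = 2 Σ_{l,m} R_{iljm} u_l u_m`. -/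


theorem normal_coordinate_curvature_identity {n : ℕ}
    (g : (Fin n → ℝ) → Matrix (Fin n) (Fin n) ℝ)
    (hg : ∀ i j, ContDiff ℝ (⊤ : ℕ∞) (fun x => g x i j))
    (hpos : ∀ x, (g x).PosDef)
    (p : Fin n → ℝ) (hgp : g p = 1)
    (hΓp : ∀ m i j, christoffel g m i j p = 0)
    (u : Fin n → ℝ) (i j : Fin n) :
    ∑ l, ∑ m,
        (pd i (fun y => pd j (fun z => (g z)⁻¹ l m) y) p
          + 2 * pd l (christoffel g m i j) p) * (u l * u m) =
      2 * ∑ l, ∑ m, riemann g i l j m p * (u l * u m) := by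
  classical
  -- basic smoothness / differentiability facts
  have hsymm : ∀ x a b, g x a b = g x b a := by
    intro x a b
    have h1 := (hpos x).1
    rw [Matrix.IsHermitian] at h1
    conv_lhs => rw [← h1]
    simp [Matrix.conjTranspose_apply]
  have hinvc : ∀ a b, ContDiff ℝ (⊤ : ℕ∞) fun x => (g x)⁻¹ a b :=
    fun a b => contDiff_inv_entry hg hpos a b
  have dgf : ∀ a b, Differentiable ℝ fun x => g x a b :=
    fun a b => (hg a b).differentiable (by simp)
  have dinv : ∀ a b, Differentiable ℝ fun x => (g x)⁻¹ a b :=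
    fun a b => (hinvc a b).differentiable (by simp)
  have cpdg : ∀ (k a b : Fin n), ContDiff ℝ (⊤ : ℕ∞) (pd k (fun y => g y a b)) :=
    fun k a b => contDiff_pd (hg a b) k
  have dpdg : ∀ (k a b : Fin n), Differentiable ℝ (pd k (fun y => g y a b)) :=
    fun k a b => (cpdg k a b).differentiable (by simp)
  have cpdinv : ∀ (k a b : Fin n), ContDiff ℝ (⊤ : ℕ∞) (pd k (fun y => (g y)⁻¹ a b)) :=
    fun k a b => contDiff_pd (hinvc a b) k
  have dpdinv : ∀ (k a b : Fin n), Differentiable ℝ (pd k (fun y => (g y)⁻¹ a b)) :=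
    fun k a b => (cpdinv k a b).differentiable (by simp)
  have hinvp : (g p)⁻¹ = 1 := by rw [hgp, inv_one]
  -- the identity g * g⁻¹ = 1, entrywise
  have hgg : ∀ (y : Fin n → ℝ) (a b : Fin n),
      ∑ s, g y a s * (g y)⁻¹ s b = (1 : Matrix (Fin n) (Fin n) ℝ) a b := by
    intro y a b
    have hdet : IsUnit (g y).det := isUnit_iff_ne_zero.2 (hpos y).det_pos.ne'
    have h1 : g y * (g y)⁻¹ = 1 := Matrix.mul_nonsing_inv _ hdet
    have h2 : (g y * (g y)⁻¹) a b = (1 : Matrix (Fin n) (Fin n) ℝ) a b := by rw [h1]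
    rw [Matrix.mul_apply] at h2
    exact h2
  -- first derivatives of g vanish at p
  have hD0 : ∀ (k a b : Fin n), pd k (fun y => g y a b) p = 0 := by
    have hS : ∀ (k a b : Fin n),
        pd k (fun y => g y a b) p = pd k (fun y => g y b a) p := by
      intro k a b
      have : (fun y => g y a b) = fun y => g y b a := funext fun y => hsymm y a b
      rw [this]
    have hC : ∀ (m a b : Fin n),
        pd a (fun y => g y b m) p + pd b (fun y => g y a m) p
          - pd m (fun y => g y a b) p = 0 := by
      intro m a b
      have h1 := hΓp m a b
      rw [christoffel] at h1
      rw [hinvp] at h1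
      have h2 : ∑ l, (1 : Matrix (Fin n) (Fin n) ℝ) m l *
          (pd a (fun y => g y b l) p + pd b (fun y => g y a l) p
            - pd l (fun y => g y a b) p)
          = pd a (fun y => g y b m) p + pd b (fun y => g y a m) p
            - pd m (fun y => g y a b) p := by
        simp [Matrix.one_apply]
      rw [h2] at h1
      linarith
    intro k a b
    have c1 := hC k a b
    have c2 := hC a k b
    have c3 := hC b a k
    have s1 := hS k a b
    have s2 := hS a b k
    have s3 := hS b a k
    have s4 := hS a k b
    have s5 := hS b k a
    have s6 := hS k b a
    linarith
  -- first derivatives of g⁻¹ vanish at p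
  have hDinv0 : ∀ (k a b : Fin n), pd k (fun y => (g y)⁻¹ a b) p = 0 := by
    intro k a b
    have hconst : (fun y => ∑ s, g y a s * (g y)⁻¹ s b)
        = fun _ => (1 : Matrix (Fin n) (Fin n) ℝ) a b := funext fun y => hgg y a b
    have h0 : pd k (fun y => ∑ s, g y a s * (g y)⁻¹ s b) p = 0 := by
      rw [hconst]; exact pd_const _ _ _
    have hexp : pd k (fun y => ∑ s, g y a s * (g y)⁻¹ s b) p
        = ∑ s, (g p a s * pd k (fun y => (g y)⁻¹ s b) p
            + (g p)⁻¹ s b * pd k (fun y => g y a s) p) := by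
      rw [pd_sum (fun s => ((dgf a s) p).fun_mul ((dinv s b) p)) k]
      exact Finset.sum_congr rfl fun s _ => pd_mul ((dgf a s) p) ((dinv s b) p) k
    rw [hexp] at h0
    simp only [hD0, mul_zero, add_zero, hgp, Matrix.one_apply] at h0
    simpa using h0
  -- second derivatives: ∂ᵢ∂ⱼ (g⁻¹)_{ab} = - ∂ᵢ∂ⱼ g_{ab} at p
  have h1 : ∀ a b : Fin n,
      pd i (fun y => pd j (fun z => (g z)⁻¹ a b) y) p = -(pdd g p i j a b) := by
    intro a b
    have hQ : ∀ y : Fin n → ℝ,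
        (∑ s, (g y a s * pd j (fun z => (g z)⁻¹ s b) y
          + (g y)⁻¹ s b * pd j (fun z => g z a s) y)) = 0 := by
      intro y
      have hconst : (fun w => ∑ s, g w a s * (g w)⁻¹ s b)
          = fun _ => (1 : Matrix (Fin n) (Fin n) ℝ) a b := funext fun w => hgg w a b
      have h0 : pd j (fun w => ∑ s, g w a s * (g w)⁻¹ s b) y = 0 := by
        rw [hconst]; exact pd_const _ _ _
      have hexp : pd j (fun w => ∑ s, g w a s * (g w)⁻¹ s b) y
          = ∑ s, (g y a s * pd j (fun z => (g z)⁻¹ s b) y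
            + (g y)⁻¹ s b * pd j (fun z => g z a s) y) := by
        rw [pd_sum (fun s => ((dgf a s) y).fun_mul ((dinv s b) y)) j]
        exact Finset.sum_congr rfl fun s _ => pd_mul ((dgf a s) y) ((dinv s b) y) j
      rw [hexp] at h0
      exact h0
    have hQ0 : pd i (fun y => ∑ s, (g y a s * pd j (fun z => (g z)⁻¹ s b) y
        + (g y)⁻¹ s b * pd j (fun z => g z a s) y)) p = 0 := by
      have : (fun y => ∑ s, (g y a s * pd j (fun z => (g z)⁻¹ s b) y
          + (g y)⁻¹ s b * pd j (fun z => g z a s) y)) = fun _ => (0 : ℝ) :=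
        funext fun y => hQ y
      rw [this]; exact pd_const _ _ _
    have hexp2 : pd i (fun y => ∑ s, (g y a s * pd j (fun z => (g z)⁻¹ s b) y
        + (g y)⁻¹ s b * pd j (fun z => g z a s) y)) p
        = ∑ s, ((g p a s * pd i (fun y => pd j (fun z => (g z)⁻¹ s b) y) p
              + pd j (fun z => (g z)⁻¹ s b) p * pd i (fun y => g y a s) p)
            + ((g p)⁻¹ s b * pd i (fun y => pd j (fun z => g z a s) y) p
              + pd j (fun z => g z a s) p * pd i (fun y => (g y)⁻¹ s b) p)) := by
      rw [pd_sum (fun s => (((dgf a s) p).fun_mul ((dpdinv j s b) p)).fun_add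
        (((dinv s b) p).fun_mul ((dpdg j a s) p))) i]
      refine Finset.sum_congr rfl fun s _ => ?_
      rw [pd_add (((dgf a s) p).fun_mul ((dpdinv j s b) p))
        (((dinv s b) p).fun_mul ((dpdg j a s) p)) i]
      rw [pd_mul ((dgf a s) p) ((dpdinv j s b) p) i,
        pd_mul ((dinv s b) p) ((dpdg j a s) p) i]
    rw [hexp2] at hQ0
    simp only [hD0, hDinv0, mul_zero, zero_mul, add_zero, hgp, inv_one,
      Matrix.one_apply] at hQ0
    have hcol : ∑ s, ((if a = s then (1:ℝ) else 0) *
          pd i (fun y => pd j (fun z => (g z)⁻¹ s b) y) p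
        + (if s = b then (1:ℝ) else 0) *
          pd i (fun y => pd j (fun z => g z a s) y) p)
        = pd i (fun y => pd j (fun z => (g z)⁻¹ a b) y) p
          + pd i (fun y => pd j (fun z => g z a b) y) p := by
      rw [Finset.sum_add_distrib]
      congr 1
      · simp
      · simp
    rw [hcol] at hQ0
    have hfin : pd i (fun y => pd j (fun z => (g z)⁻¹ a b) y) p
        = - pd i (fun y => pd j (fun z => g z a b) y) p := by linarith
    exact hfin
  -- derivatives of the Christoffel symbols at p
  have h2 : ∀ (k a b c : Fin n), pd k (christoffel g c a b) p
      = (1/2) * (pdd g p k a b c + pdd g p k b a c - pdd g p k c a b) := by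
    intro k a b c
    have dT : ∀ l : Fin n, DifferentiableAt ℝ
        (fun x => pd a (fun y => g y b l) x + pd b (fun y => g y a l) x
          - pd l (fun y => g y a b) x) p :=
      fun l => (((dpdg a b l) p).add ((dpdg b a l) p)).sub ((dpdg l a b) p)
    have dprod : ∀ l : Fin n, DifferentiableAt ℝ
        (fun x => (g x)⁻¹ c l * (pd a (fun y => g y b l) x + pd b (fun y => g y a l) x
          - pd l (fun y => g y a b) x)) p :=
      fun l => ((dinv c l) p).mul (dT l)
    have dsum : DifferentiableAt ℝ
        (fun x => ∑ l, (g x)⁻¹ c l * (pd a (fun y => g y b l) x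
          + pd b (fun y => g y a l) x - pd l (fun y => g y a b) x)) p :=
      DifferentiableAt.fun_sum fun l _ => dprod l
    have hTval : ∀ l : Fin n, pd k (fun x => pd a (fun y => g y b l) x
        + pd b (fun y => g y a l) x - pd l (fun y => g y a b) x) p
        = pdd g p k a b l + pdd g p k b a l - pdd g p k l a b := by
      intro l
      rw [pd_sub (((dpdg a b l) p).fun_add ((dpdg b a l) p)) ((dpdg l a b) p) k,
        pd_add ((dpdg a b l) p) ((dpdg b a l) p) k]
      rfl
    have hT0 : ∀ l : Fin n, pd a (fun y => g y b l) p + pd b (fun y => g y a l) p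
        - pd l (fun y => g y a b) p = 0 := by
      intro l; rw [hD0, hD0, hD0]; ring
    calc pd k (christoffel g c a b) p
        = (1/2) * pd k (fun x => ∑ l, (g x)⁻¹ c l * (pd a (fun y => g y b l) x
            + pd b (fun y => g y a l) x - pd l (fun y => g y a b) x)) p :=
          pd_const_mul dsum (1/2) k
      _ = (1/2) * ∑ l, pd k (fun x => (g x)⁻¹ c l * (pd a (fun y => g y b l) x
            + pd b (fun y => g y a l) x - pd l (fun y => g y a b) x)) p := by
          rw [pd_sum (fun l => dprod l) k]
      _ = (1/2) * ∑ l, ((g p)⁻¹ c l * (pdd g p k a b l + pdd g p k b a l - pdd g p k l a b)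
            + (pd a (fun y => g y b l) p + pd b (fun y => g y a l) p
              - pd l (fun y => g y a b) p) * pd k (fun x => (g x)⁻¹ c l) p) := by
          congr 1
          refine Finset.sum_congr rfl fun l _ => ?_
          rw [pd_mul ((dinv c l) p) (dT l) k, hTval l]
      _ = (1/2) * (pdd g p k a b c + pdd g p k b a c - pdd g p k c a b) := by
          congr 1
          have hterm : ∀ l : Fin n, (g p)⁻¹ c l *
              (pdd g p k a b l + pdd g p k b a l - pdd g p k l a b)
              + (pd a (fun y => g y b l) p + pd b (fun y => g y a l) p
                - pd l (fun y => g y a b) p) * pd k (fun x => (g x)⁻¹ c l) p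
              = (1 : Matrix (Fin n) (Fin n) ℝ) c l *
                (pdd g p k a b l + pdd g p k b a l - pdd g p k l a b) := by
            intro l
            rw [hT0 l, hinvp]; ring
          rw [Finset.sum_congr rfl fun l _ => hterm l]
          simp [Matrix.one_apply]
  -- the Riemann tensor at p
  have h3 : ∀ l m : Fin n, riemann g i l j m p
      = pd l (christoffel g m i j) p - pd i (christoffel g m l j) p := by
    intro l m
    rw [riemann]
    have hterm : ∀ s : Fin n, g p m s *
        (pd l (christoffel g s i j) p - pd i (christoffel g s l j) p
          + ∑ r, (christoffel g s l r p * christoffel g r i j p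
              - christoffel g s i r p * christoffel g r l j p))
        = (1 : Matrix (Fin n) (Fin n) ℝ) m s *
          (pd l (christoffel g s i j) p - pd i (christoffel g s l j) p) := by
      intro s
      simp [hΓp, hgp]
    rw [Finset.sum_congr rfl fun s _ => hterm s]
    simp [Matrix.one_apply]
  -- assemble everything
  have e1 : ∑ l, ∑ m,
      (pd i (fun y => pd j (fun z => (g z)⁻¹ l m) y) p
        + 2 * pd l (christoffel g m i j) p) * (u l * u m)
      = ∑ l, ∑ m, (-(pdd g p i j l m) + (pdd g p l i j m + pdd g p l j i m
          - pdd g p l m i j)) * (u l * u m) := by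
    refine Finset.sum_congr rfl fun l _ => Finset.sum_congr rfl fun m _ => ?_
    rw [h1 l m, h2 l i j m]
    ring
  have e2 : 2 * ∑ l, ∑ m, riemann g i l j m p * (u l * u m)
      = ∑ l, ∑ m, (2 * ((1/2) * (pdd g p l i j m + pdd g p l j i m - pdd g p l m i j)
          - (1/2) * (pdd g p i l j m + pdd g p i j l m - pdd g p i m l j)))
        * (u l * u m) := by
    rw [Finset.mul_sum]
    refine Finset.sum_congr rfl fun l _ => ?_
    rw [Finset.mul_sum]
    refine Finset.sum_congr rfl fun m _ => ?_
    rw [h3 l m, h2 l i j m, h2 i l j m]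
    ring
  rw [e1, e2]
  refine nc_alg (pdd g p) u i j ?_
  intro k1 k2 a b
  have hba : (fun z => g z a b) = fun z => g z b a := funext fun z => hsymm z a b
  rw [pdd, pdd, hba]
end
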